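/- arXiv:2506.12856 — 4 statements merged into one kernel-verified Lean document; each statement's English description precedes it below -/
import Mathlib

section
/- Packing bound for pairwise indistinguishable measures: Let c ∈ [0,1], let 0 < γ ≤ 1/2, let 0 ≤ ε ≤ 0.1 and let 0 ≤ δ ≤ γ⁴/(6·log²(1/γ)). Let P_1,…,P_n be probability measures on a common measurable space such that for all i, j and every measurable set E one has P_i(E) ≤ e^ε·P_j(E) + δ. Suppose there exist measurable events E_1,…,E_n such that for all i, j: P_i(E_j) ≤ c − γ whenever j < i, and P_i(E_j) ≥ c + γ whenever j > i. Then n ≤ 2^{γ^{−2}·log²(1/γ)}. -/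
open MeasureTheory
open scoped ENNReal

local notation "⟪" x ", " y "⟫" => @inner ℝ _ _ x y

private lemma perceptron_rec {F : Type*} [NormedAddCommGroup F] [InnerProductSpace ℝ F]
    (u v : ℕ → F) (γ' R2 : ℝ) (M : ℕ)
    (hv : ∀ j, 0 < j → j < M → ⟪v j, v j⟫ ≤ R2)
    (hup : ∀ i j, 0 < i → i < M → 0 < j → j < M → i < j → γ' ≤ ⟪u i, v j⟫)
    (hdn : ∀ i j, 0 < i → i < M → 0 < j → j < M → j < i → ⟪u i, v j⟫ ≤ -γ') :
    ∀ k : ℕ, ∀ lo hi : ℕ, hi ≤ M → lo + 2^(k+1) ≤ hi → ∀ w : F,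
      ∃ i w', lo < i ∧ i < hi ∧ ‖w'‖^2 ≤ ‖w‖^2 + k * R2 ∧ (k:ℝ) * γ' ≤ ⟪u i, w' - w⟫ := by
  intro k
  induction k with
  | zero =>
    intro lo hi hhi hlh w
    refine ⟨lo+1, w, by omega, by omega, by simp, by simp⟩
  | succ k ih =>
    intro lo hi hhi hlh w
    have hpow : 0 < 2^(k+1) := Nat.pow_pos (by norm_num)
    set j := lo + 2^(k+1) with hj
    have hjhi : j + 2^(k+1) ≤ hi := by
      have h2 : 2^(k+1+1) = 2^(k+1) + 2^(k+1) := by ring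
      omega
    have hj0 : 0 < j := by omega
    have hjM : j < M := by omega
    have hvj : ‖v j‖^2 ≤ R2 := by
      rw [← real_inner_self_eq_norm_sq]; exact hv j hj0 hjM
    by_cases hcase : ⟪w, v j⟫ ≤ 0
    · obtain ⟨i, w', hi1, hi2, hnorm, hprog⟩ := ih lo j (le_of_lt hjM) le_rfl (w + v j)
      refine ⟨i, w', hi1, by omega, ?_, ?_⟩
      · have hexp : ‖w + v j‖^2 = ‖w‖^2 + 2*⟪w, v j⟫ + ‖v j‖^2 := norm_add_sq_real w (v j)
        push_cast
        nlinarith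
      · have hm : γ' ≤ ⟪u i, v j⟫ := hup i j (by omega) (by omega) hj0 hjM hi2
        have hw : w' - w = (w' - (w + v j)) + v j := by abel
        push_cast
        rw [hw, inner_add_right]; linarith
    · push_neg at hcase
      obtain ⟨i, w', hi1, hi2, hnorm, hprog⟩ := ih j hi hhi hjhi (w - v j)
      refine ⟨i, w', by omega, hi2, ?_, ?_⟩
      · have hexp : ‖w - v j‖^2 = ‖w‖^2 - 2*⟪w, v j⟫ + ‖v j‖^2 := norm_sub_sq_real w (v j)
        push_cast
        nlinarith
      · have hm : ⟪u i, v j⟫ ≤ -γ' := hdn i j (by omega) (by omega) hj0 hjM hi1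
        have hw : w' - w = (w' - (w - v j)) + -(v j) := by abel
        push_cast
        rw [hw, inner_add_right, inner_neg_right]; linarith

private lemma perceptron_bound {F : Type*} [NormedAddCommGroup F] [InnerProductSpace ℝ F]
    (u v : ℕ → F) (γ' R2 Usq : ℝ) (hγ' : 0 < γ') (M : ℕ)
    (hv : ∀ j, 0 < j → j < M → ⟪v j, v j⟫ ≤ R2)
    (hu : ∀ i, 0 < i → i < M → ⟪u i, u i⟫ ≤ Usq)
    (hup : ∀ i j, 0 < i → i < M → 0 < j → j < M → i < j → γ' ≤ ⟪u i, v j⟫)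
    (hdn : ∀ i j, 0 < i → i < M → 0 < j → j < M → j < i → ⟪u i, v j⟫ ≤ -γ')
    (k : ℕ) (hk : 2^(k+1) ≤ M) : (k:ℝ) ≤ Usq * R2 / γ'^2 := by
  obtain ⟨i, w', hi1, hi2, hnorm, hprog⟩ :=
    perceptron_rec u v γ' R2 M hv hup hdn k 0 M le_rfl (by omega) 0
  have huinner : ∀ i, 0 < i → i < M → ‖u i‖^2 ≤ Usq := by
    intro i h1 h2
    rw [← real_inner_self_eq_norm_sq]; exact hu i h1 h2
  have hUsq : 0 ≤ Usq := le_trans (sq_nonneg _) (huinner i hi1 hi2)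
  have hR2 : 0 ≤ R2 := by
    have h2 : 1 < 2^(k+1) := Nat.one_lt_two_pow_iff.2 (by omega)
    exact le_trans (real_inner_self_nonneg) (hv 1 one_pos (by omega))
  rcases Nat.eq_zero_or_pos k with hk0 | hk0
  · subst hk0; simp; positivity
  have hCS : ⟪u i, w' - 0⟫ ≤ ‖u i‖ * ‖w' - 0‖ := real_inner_le_norm _ _
  have hui : ‖u i‖^2 ≤ Usq := huinner i hi1 hi2
  have hw' : ‖w' - 0‖^2 ≤ (k:ℝ) * R2 := by simpa using hnorm
  have hn0 : (0:ℝ) ≤ ‖w' - 0‖ := norm_nonneg _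
  have hun0 : (0:ℝ) ≤ ‖u i‖ := norm_nonneg _
  have h1 : (k:ℝ) * γ' ≤ ‖u i‖ * ‖w' - 0‖ := le_trans hprog hCS
  have hk1 : (1:ℝ) ≤ (k:ℝ) := by exact_mod_cast hk0
  rw [le_div_iff₀ (by positivity)]
  have h2 : ((k:ℝ)*γ')^2 ≤ (‖u i‖ * ‖w' - 0‖)^2 := pow_le_pow_left₀ (by positivity) h1 2
  have h3 : (‖u i‖ * ‖w' - 0‖)^2 ≤ Usq * ((k:ℝ) * R2) := by
    have : (‖u i‖ * ‖w' - 0‖)^2 = ‖u i‖^2 * ‖w' - 0‖^2 := by ring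
    rw [this]
    apply mul_le_mul hui hw' (sq_nonneg _) hUsq
  nlinarith

private lemma clamp_density {Ω : Type} [MeasurableSpace Ω] (P Q : Measure Ω)
    [IsProbabilityMeasure P] [IsProbabilityMeasure Q] (ε δ : ℝ) (hε0 : 0 ≤ ε) (hδ0 : 0 ≤ δ)
    (hPQ : ∀ S, MeasurableSet S → P S ≤ ENNReal.ofReal (Real.exp ε) * Q S + ENNReal.ofReal δ)
    (hQP : ∀ S, MeasurableSet S → Q S ≤ ENNReal.ofReal (Real.exp ε) * P S + ENNReal.ofReal δ) :
    ∃ g : Ω → ℝ, Measurable g ∧ (∀ ω, |g ω| ≤ Real.exp ε - 1) ∧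
      ∀ S, MeasurableSet S → |(∫ ω in S, g ω ∂Q) - ((P S).toReal - (Q S).toReal)| ≤ δ := by
  set f : Ω → ℝ := fun ω => (P.rnDeriv Q ω).toReal with hf_def
  have hf_meas : Measurable f := (Measure.measurable_rnDeriv P Q).ennreal_toReal
  have hf_int : Integrable f Q := Measure.integrable_toReal_rnDeriv
  set wd : Measure Ω := Q.withDensity (P.rnDeriv Q) with hwd_def
  set sing : Measure Ω := P.singularPart Q with hsing_def
  have hdecomp : P = sing + wd := Measure.haveLebesgueDecomposition_add P Q
  -- set integral of f equals wd
  have hint_f : ∀ S : Set Ω, MeasurableSet S → ∫ ω in S, f ω ∂Q = (wd S).toReal := by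
    intro S hS
    rw [hwd_def, withDensity_apply _ hS]
    rw [hf_def]
    rw [MeasureTheory.integral_toReal]
    · exact (Measure.measurable_rnDeriv P Q).aemeasurable.restrict
    · exact ae_restrict_of_ae (Measure.rnDeriv_lt_top P Q)
  -- finiteness
  have hwd_fin : ∀ S : Set Ω, wd S ≠ ⊤ := by
    intro S
    have h1 : wd S ≤ P S := by
      rw [hdecomp]; simp [Measure.add_apply]
    exact ne_top_of_le_ne_top (measure_ne_top P S) h1
  have hwd_le_P : ∀ S : Set Ω, (wd S).toReal ≤ (P S).toReal := by
    intro S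
    apply ENNReal.toReal_mono (measure_ne_top P S)
    rw [hdecomp]; simp [Measure.add_apply]
  -- singular support
  obtain ⟨T0, hT0meas, hsT0, hQT0c⟩ := Measure.mutuallySingular_singularPart P Q
  -- sing T0 = 0, Q T0ᶜ = 0
  have hsing_eq : ∀ S : Set Ω, sing S ≤ sing T0ᶜ := by
    intro S
    calc sing S ≤ sing (S ∩ T0) + sing (S ∩ T0ᶜ) := by
          rw [← measure_inter_add_diff S hT0meas]; rfl
    _ ≤ 0 + sing T0ᶜ := by
          gcongr
          · exact le_trans (measure_mono Set.inter_subset_right) (le_of_eq hsT0)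
          · exact Set.inter_subset_right
    _ = sing T0ᶜ := by rw [zero_add]
  have hsing_univ_le : sing Set.univ ≤ ENNReal.ofReal δ := by
    calc sing Set.univ ≤ sing T0ᶜ := hsing_eq _
    _ ≤ P T0ᶜ := Measure.le_iff'.1 (Measure.singularPart_le P Q) _
    _ ≤ ENNReal.ofReal (Real.exp ε) * Q T0ᶜ + ENNReal.ofReal δ := hPQ _ hT0meas.compl
    _ = ENNReal.ofReal δ := by rw [hQT0c]; simp
  have hsing_toReal : (sing Set.univ).toReal ≤ δ := by
    refine le_trans (ENNReal.toReal_mono (by simp) hsing_univ_le) (by simp [hδ0])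
  have hsing_fin : sing Set.univ ≠ ⊤ := ne_top_of_le_ne_top (by simp) hsing_univ_le
  -- the A bound : ∫ (f - e^ε)⁺ + sing(univ) ≤ δ
  set Apos : Ω → ℝ := fun ω => max (f ω - Real.exp ε) 0 with hA_def
  have hApos_int : Integrable Apos Q := (hf_int.sub (integrable_const _)).pos_part
  have hApos_nonneg : ∀ ω, 0 ≤ Apos ω := fun ω => le_max_right _ _
  set B : Set Ω := {ω | Real.exp ε < f ω} with hB_def
  have hBmeas : MeasurableSet B := measurableSet_lt measurable_const hf_meas
  have hA_eq : ∫ ω, Apos ω ∂Q = (wd B).toReal - Real.exp ε * (Q B).toReal := by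
    have h1 : ∫ ω, Apos ω ∂Q = ∫ ω in B, (f ω - Real.exp ε) ∂Q := by
      rw [← integral_indicator hBmeas]
      apply integral_congr_ae
      filter_upwards with ω
      by_cases hω : ω ∈ B
      · have hωB : Real.exp ε < f ω := hω
        rw [Set.indicator_of_mem hω]
        simp only [hA_def]
        rw [max_eq_left (by linarith)]
      · have hωB : ¬ Real.exp ε < f ω := hω
        push_neg at hωB
        rw [Set.indicator_of_notMem hω]
        simp only [hA_def]
        rw [max_eq_right (by linarith)]
    rw [h1, integral_sub hf_int.integrableOn (integrable_const _),
      hint_f B hBmeas, setIntegral_const]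
    simp [mul_comm]; rfl
  have hkey_A : (∫ ω, Apos ω ∂Q) + (sing Set.univ).toReal ≤ δ := by
    -- event B ∪ T0ᶜ
    have hP_BT : sing Set.univ + wd B ≤ ENNReal.ofReal (Real.exp ε) * Q B + ENNReal.ofReal δ := by
      have h0 : sing Set.univ + wd B ≤ P (B ∪ T0ᶜ) := by
        have h1 : sing Set.univ = sing T0ᶜ :=
          le_antisymm (hsing_eq _) (measure_mono (Set.subset_univ _))
        rw [hdecomp]
        simp only [Measure.add_apply]
        rw [h1]
        exact add_le_add (measure_mono Set.subset_union_right)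
          (measure_mono Set.subset_union_left)
      have h2 : Q (B ∪ T0ᶜ) ≤ Q B := by
        calc Q (B ∪ T0ᶜ) ≤ Q B + Q T0ᶜ := measure_union_le _ _
        _ = Q B := by rw [hQT0c, add_zero]
      calc sing Set.univ + wd B ≤ P (B ∪ T0ᶜ) := h0
      _ ≤ ENNReal.ofReal (Real.exp ε) * Q (B ∪ T0ᶜ) + ENNReal.ofReal δ :=
          hPQ _ (hBmeas.union hT0meas.compl)
      _ ≤ ENNReal.ofReal (Real.exp ε) * Q B + ENNReal.ofReal δ := by gcongr
    -- toReal
    have h3 : (sing Set.univ).toReal + (wd B).toReal ≤ Real.exp ε * (Q B).toReal + δ := by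
      have hl : (sing Set.univ + wd B).toReal = (sing Set.univ).toReal + (wd B).toReal :=
        ENNReal.toReal_add hsing_fin (hwd_fin B)
      have hr : (ENNReal.ofReal (Real.exp ε) * Q B + ENNReal.ofReal δ).toReal
          = Real.exp ε * (Q B).toReal + δ := by
        rw [ENNReal.toReal_add (by finiteness) (by finiteness), ENNReal.toReal_mul,
          ENNReal.toReal_ofReal (le_of_lt (Real.exp_pos ε)), ENNReal.toReal_ofReal hδ0]
      rw [← hl, ← hr]
      apply ENNReal.toReal_mono (by finiteness) hP_BT
    rw [hA_eq]; linarith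
  -- the A₂ bound
  set A2pos : Ω → ℝ := fun ω => max (Real.exp (-ε) - f ω) 0 with hA2_def
  have hA2_int : Integrable A2pos Q := ((integrable_const _).sub hf_int).pos_part
  have hA2_nonneg : ∀ ω, 0 ≤ A2pos ω := fun ω => le_max_right _ _
  set B2 : Set Ω := {ω | f ω < Real.exp (-ε)} with hB2_def
  have hB2meas : MeasurableSet B2 := measurableSet_lt hf_meas measurable_const
  have hA2_eq : ∫ ω, A2pos ω ∂Q = Real.exp (-ε) * (Q B2).toReal - (wd B2).toReal := by
    have h1 : ∫ ω, A2pos ω ∂Q = ∫ ω in B2, (Real.exp (-ε) - f ω) ∂Q := by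
      rw [← integral_indicator hB2meas]
      apply integral_congr_ae
      filter_upwards with ω
      by_cases hω : ω ∈ B2
      · have hωB : f ω < Real.exp (-ε) := hω
        rw [Set.indicator_of_mem hω]
        simp only [hA2_def]
        rw [max_eq_left (by linarith)]
      · have hωB : ¬ f ω < Real.exp (-ε) := hω
        push_neg at hωB
        rw [Set.indicator_of_notMem hω]
        simp only [hA2_def]
        rw [max_eq_right (by linarith)]
    rw [h1, integral_sub (integrable_const _) hf_int.integrableOn,
      hint_f B2 hB2meas, setIntegral_const]
    simp [mul_comm]; rfl
  have hkey_A2 : (∫ ω, A2pos ω ∂Q) ≤ δ := by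
    -- event B2 ∩ T0
    have h0 : Q B2 ≤ ENNReal.ofReal (Real.exp ε) * wd B2 + ENNReal.ofReal δ := by
      have hq : Q B2 = Q (B2 ∩ T0) := by
        have : Q (B2 \ T0) = 0 :=
          measure_mono_null (fun ω ⟨_, h2⟩ => h2) hQT0c
        rw [← measure_inter_add_diff B2 hT0meas, this, add_zero]
      have hp : P (B2 ∩ T0) ≤ wd B2 := by
        rw [hdecomp]
        simp only [Measure.add_apply]
        have hs0 : sing (B2 ∩ T0) = 0 :=
          measure_mono_null Set.inter_subset_right hsT0
        rw [hs0, zero_add]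
        exact measure_mono Set.inter_subset_left
      calc Q B2 = Q (B2 ∩ T0) := hq
      _ ≤ ENNReal.ofReal (Real.exp ε) * P (B2 ∩ T0) + ENNReal.ofReal δ :=
          hQP _ (hB2meas.inter hT0meas)
      _ ≤ ENNReal.ofReal (Real.exp ε) * wd B2 + ENNReal.ofReal δ := by gcongr
    have h1 : (Q B2).toReal ≤ Real.exp ε * (wd B2).toReal + δ := by
      have hr : (ENNReal.ofReal (Real.exp ε) * wd B2 + ENNReal.ofReal δ).toReal
          = Real.exp ε * (wd B2).toReal + δ := by
        rw [ENNReal.toReal_add, ENNReal.toReal_mul,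
          ENNReal.toReal_ofReal (le_of_lt (Real.exp_pos ε)), ENNReal.toReal_ofReal hδ0]
        · exact ENNReal.mul_ne_top (by finiteness) (hwd_fin B2)
        · finiteness
      have hfin : ENNReal.ofReal (Real.exp ε) * wd B2 + ENNReal.ofReal δ ≠ ⊤ :=
        ENNReal.add_ne_top.2 ⟨ENNReal.mul_ne_top (by finiteness) (hwd_fin B2), by finiteness⟩
      rw [← hr]
      exact ENNReal.toReal_mono hfin h0
    rw [hA2_eq]
    have he : Real.exp (-ε) * Real.exp ε = 1 := by
      rw [← Real.exp_add]; simp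
    have hepos : 0 < Real.exp (-ε) := Real.exp_pos _
    have hle1 : Real.exp (-ε) ≤ 1 := by
      have := Real.exp_le_exp.2 (show -ε ≤ 0 by linarith)
      rwa [Real.exp_zero] at this
    nlinarith [ENNReal.toReal_nonneg (a := wd B2)]
  -- define g
  refine ⟨fun ω => max (Real.exp (-ε) - 1) (min (f ω - 1) (Real.exp ε - 1)), ?_, ?_, ?_⟩
  · exact measurable_const.max ((hf_meas.sub measurable_const).min measurable_const)
  · intro ω
    have h1 : Real.exp (-ε) ≤ 1 := Real.exp_le_one_iff.2 (by linarith)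
    have h2 : 1 ≤ Real.exp ε := Real.one_le_exp hε0
    have h3 : Real.exp (-ε) * Real.exp ε = 1 := by rw [← Real.exp_add]; simp
    have h4 : 0 < Real.exp (-ε) := Real.exp_pos _
    rw [abs_le]
    constructor
    · have : -(Real.exp ε - 1) ≤ Real.exp (-ε) - 1 := by nlinarith
      exact le_trans this (le_max_left _ _)
    · apply max_le (by nlinarith)
      exact le_trans (min_le_right _ _) le_rfl
  · intro S hS
    set g : Ω → ℝ := fun ω => max (Real.exp (-ε) - 1) (min (f ω - 1) (Real.exp ε - 1)) with hg_def
    have hg_meas : Measurable g :=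
      measurable_const.max ((hf_meas.sub measurable_const).min measurable_const)
    have hg_int : Integrable g Q := by
      have : ∀ ω, ‖g ω‖ ≤ Real.exp ε := by
        intro ω
        rw [Real.norm_eq_abs]
        have h1 : Real.exp (-ε) ≤ 1 := Real.exp_le_one_iff.2 (by linarith)
        have h2 : 1 ≤ Real.exp ε := Real.one_le_exp hε0
        have h3 : Real.exp (-ε) * Real.exp ε = 1 := by rw [← Real.exp_add]; simp
        have h4 : 0 < Real.exp (-ε) := Real.exp_pos _
        rw [abs_le]
        refine ⟨?_, max_le (by nlinarith) (le_trans (min_le_right _ _) (by linarith))⟩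
        have : -(Real.exp ε) ≤ Real.exp (-ε) - 1 := by nlinarith
        exact le_trans this (le_max_left _ _)
      exact (memLp_one_iff_integrable.1 (MemLp.of_bound hg_meas.aestronglyMeasurable _
        (Filter.Eventually.of_forall this)))
    -- pointwise bounds
    have hpt_up : ∀ ω, g ω ≤ (f ω - 1) + A2pos ω := by
      intro ω
      rcases le_or_gt (f ω - 1) (Real.exp (-ε) - 1) with h | h
      · have : g ω ≤ max (Real.exp (-ε) -1) (Real.exp ε - 1) := by
          apply max_le (le_max_left _ _)
          exact le_trans (min_le_right _ _) (le_max_right _ _)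
        have h2 : Real.exp (-ε) - 1 ≤ Real.exp ε - 1 := by
          have := Real.exp_le_exp.2 (by linarith : -ε ≤ ε); linarith
        rw [max_eq_right h2] at this
        have hA2 : A2pos ω = Real.exp (-ε) - f ω := by
          rw [hA2_def]; simp only; rw [max_eq_left (by linarith)]
        have hg : g ω = Real.exp (-ε) - 1 := by
          rw [hg_def]; simp only
          rw [min_eq_left (by linarith), max_eq_left h]
        rw [hg, hA2]; linarith
      · have hg : g ω ≤ f ω - 1 := by
          apply max_le (by linarith) (min_le_left _ _)
        have := hA2_nonneg ω
        linarith
    have hpt_dn : ∀ ω, (f ω - 1) - Apos ω ≤ g ω := by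
      intro ω
      rcases le_or_gt (f ω - 1) (Real.exp ε - 1) with h | h
      · have hg : min (f ω - 1) (Real.exp ε - 1) = f ω - 1 := min_eq_left h
        have : f ω - 1 ≤ g ω := by rw [hg_def]; simp only [hg]; exact le_max_right _ _
        have := hApos_nonneg ω
        linarith
      · have hA : Apos ω = f ω - Real.exp ε := by
          rw [hA_def]; simp only; rw [max_eq_left (by linarith)]
        have : Real.exp ε - 1 ≤ g ω := by
          rw [hg_def]; simp only
          rw [min_eq_right (by linarith)]
          exact le_max_right _ _
        rw [hA]; linarith
    -- integrate
    have hSint : ∫ ω in S, (f ω - 1) ∂Q = (wd S).toReal - (Q S).toReal := by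
      rw [integral_sub hf_int.integrableOn (integrable_const _), hint_f S hS, setIntegral_const]
      simp; rfl
    have hup : ∫ ω in S, g ω ∂Q ≤ (P S).toReal - (Q S).toReal + δ := by
      have h1 : ∫ ω in S, g ω ∂Q ≤ ∫ ω in S, ((f ω - 1) + A2pos ω) ∂Q :=
        setIntegral_mono_on hg_int.integrableOn
          ((hf_int.sub (integrable_const _)).add hA2_int).integrableOn hS
          (fun ω _ => hpt_up ω)
      have h2 : ∫ ω in S, ((f ω - 1) + A2pos ω) ∂Q
          = (∫ ω in S, (f ω - 1) ∂Q) + ∫ ω in S, A2pos ω ∂Q := by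
        have i1 : Integrable (fun ω => f ω - 1) (Q.restrict S) :=
          (hf_int.sub (integrable_const 1)).integrableOn
        have i2 : Integrable A2pos (Q.restrict S) := hA2_int.integrableOn
        exact integral_add i1 i2
      have h3 : ∫ ω in S, A2pos ω ∂Q ≤ ∫ ω, A2pos ω ∂Q :=
        setIntegral_le_integral hA2_int (Filter.Eventually.of_forall hA2_nonneg)
      have h4 := hwd_le_P S
      rw [h2, hSint] at h1
      linarith
    have hdn : (P S).toReal - (Q S).toReal - δ ≤ ∫ ω in S, g ω ∂Q := by
      have h1 : ∫ ω in S, ((f ω - 1) - Apos ω) ∂Q ≤ ∫ ω in S, g ω ∂Q :=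
        setIntegral_mono_on
          ((hf_int.sub (integrable_const _)).sub hApos_int).integrableOn
          hg_int.integrableOn hS (fun ω _ => hpt_dn ω)
      have h2 : ∫ ω in S, ((f ω - 1) - Apos ω) ∂Q
          = (∫ ω in S, (f ω - 1) ∂Q) - ∫ ω in S, Apos ω ∂Q := by
        have i1 : Integrable (fun ω => f ω - 1) (Q.restrict S) :=
          (hf_int.sub (integrable_const 1)).integrableOn
        have i2 : Integrable Apos (Q.restrict S) := hApos_int.integrableOn
        exact integral_sub i1 i2
      have h3 : ∫ ω in S, Apos ω ∂Q ≤ ∫ ω, Apos ω ∂Q :=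
        setIntegral_le_integral hApos_int (Filter.Eventually.of_forall hApos_nonneg)
      -- P S ≤ wd S + sing univ
      have h4 : (P S).toReal ≤ (wd S).toReal + (sing Set.univ).toReal := by
        have : P S ≤ wd S + sing Set.univ := by
          rw [hdecomp]
          simp only [Measure.add_apply]
          rw [add_comm]
          exact add_le_add le_rfl (measure_mono (Set.subset_univ _))
        calc (P S).toReal ≤ (wd S + sing Set.univ).toReal :=
              ENNReal.toReal_mono (ENNReal.add_ne_top.2 ⟨hwd_fin S, hsing_fin⟩) this
        _ = (wd S).toReal + (sing Set.univ).toReal := ENNReal.toReal_add (hwd_fin S) hsing_fin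
      rw [h2, hSint] at h1
      linarith
    rw [abs_le]
    constructor <;> linarith


private lemma toReal_ind {Ω : Type} [MeasurableSpace Ω] (P Q : Measure Ω)
    [IsProbabilityMeasure P] [IsProbabilityMeasure Q] (S : Set Ω) (e d : ℝ)
    (he : 0 ≤ e) (hd : 0 ≤ d)
    (h : P S ≤ ENNReal.ofReal e * Q S + ENNReal.ofReal d) :
    (P S).toReal ≤ e * (Q S).toReal + d := by
  have hfin : ENNReal.ofReal e * Q S + ENNReal.ofReal d ≠ ⊤ :=
    ENNReal.add_ne_top.2 ⟨ENNReal.mul_ne_top (by finiteness) (measure_ne_top _ _), by finiteness⟩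
  have hr : (ENNReal.ofReal e * Q S + ENNReal.ofReal d).toReal = e * (Q S).toReal + d := by
    rw [ENNReal.toReal_add (ENNReal.mul_ne_top (by finiteness) (measure_ne_top _ _))
      (by finiteness), ENNReal.toReal_mul, ENNReal.toReal_ofReal he, ENNReal.toReal_ofReal hd]
  rw [← hr]
  exact ENNReal.toReal_mono hfin h

private lemma integrable_of_bdd {Ω : Type} [MeasurableSpace Ω] {Q : Measure Ω}
    [IsFiniteMeasure Q] {f : Ω → ℝ} (hm : Measurable f) (C : ℝ) (hb : ∀ ω, |f ω| ≤ C) :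
    Integrable f Q :=
  memLp_one_iff_integrable.1 (MemLp.of_bound hm.aestronglyMeasurable C
    (Filter.Eventually.of_forall (fun ω => by simpa using hb ω)))

private lemma inner_toLp {Ω : Type} [MeasurableSpace Ω] (Q : Measure Ω) (f₁ f₂ : Ω → ℝ)
    (h₁ : MemLp f₁ 2 Q) (h₂ : MemLp f₂ 2 Q) :
    ⟪h₁.toLp f₁, h₂.toLp f₂⟫ = ∫ ω, f₁ ω * f₂ ω ∂Q := by
  rw [MeasureTheory.L2.inner_def]
  apply integral_congr_ae
  filter_upwards [h₁.coeFn_toLp, h₂.coeFn_toLp] with ω e₁ e₂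
  rw [e₁, e₂]
  simp [RCLike.inner_apply, mul_comm]

set_option maxHeartbeats 2000000 in
/-- Packing bound for pairwise `(ε,δ)`-indistinguishable probability measures admitting a
threshold family of events. All logarithms are base 2. -/
theorem stmt2 {Ω : Type} [MeasurableSpace Ω] (n : ℕ) (c γ ε δ : ℝ)
    (hc : c ∈ Set.Icc (0:ℝ) 1) (hγ0 : 0 < γ) (hγ : γ ≤ 1/2)
    (hε0 : 0 ≤ ε) (hε : ε ≤ 0.1) (hδ0 : 0 ≤ δ)
    (hδ : δ ≤ γ ^ 4 / (6 * (Real.logb 2 (1/γ)) ^ 2))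
    (P : Fin n → Measure Ω) (hP : ∀ i, IsProbabilityMeasure (P i))
    (hind : ∀ i j : Fin n, ∀ E : Set Ω, MeasurableSet E →
      P i E ≤ ENNReal.ofReal (Real.exp ε) * P j E + ENNReal.ofReal δ)
    (E : Fin n → Set Ω) (hE : ∀ j, MeasurableSet (E j))
    (hlt : ∀ i j : Fin n, j < i → ((P i) (E j)).toReal ≤ c - γ)
    (hgt : ∀ i j : Fin n, i < j → c + γ ≤ ((P i) (E j)).toReal) :
    (n : ℝ) ≤ (2:ℝ) ^ ((1/γ) ^ 2 * (Real.logb 2 (1/γ)) ^ 2) := by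
  -- basic log facts
  have h2γ : 2 ≤ 1/γ := by
    rw [le_div_iff₀ hγ0]; linarith
  have hlogb1 : 1 ≤ Real.logb 2 (1/γ) := by
    have h22 : Real.logb 2 2 = 1 := by
      simp
    calc (1:ℝ) = Real.logb 2 2 := h22.symm
    _ ≤ _ := Real.logb_le_logb_of_le (by norm_num) (by norm_num) h2γ
  have hγ2 : (4:ℝ) ≤ 1/γ^2 := by
    rw [le_div_iff₀ (by positivity)]
    nlinarith
  have hL4 : (4:ℝ) ≤ (1/γ) ^ 2 * (Real.logb 2 (1/γ)) ^ 2 := by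
    have h1 : (1:ℝ) ≤ (Real.logb 2 (1/γ))^2 := by nlinarith
    have h2 : (1/γ)^2 = 1/γ^2 := by rw [div_pow]; norm_num
    nlinarith
  -- trivial case
  rcases le_or_gt n 16 with hn16 | hn16
  · calc (n:ℝ) ≤ 16 := by exact_mod_cast hn16
    _ = (2:ℝ)^((4:ℕ):ℝ) := by rw [Real.rpow_natCast]; norm_num
    _ ≤ (2:ℝ) ^ ((1/γ) ^ 2 * (Real.logb 2 (1/γ)) ^ 2) := by
        apply Real.rpow_le_rpow_left_iff (by norm_num) |>.2
        push_cast
        exact hL4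
  -- nontrivial case: n ≥ 17
  have hexp1 : Real.exp ε ≤ 1.1052 := by
    have h1 : Real.exp ε ≤ Real.exp 0.1 := Real.exp_le_exp.2 hε
    have h2 : Real.exp 0.1 ≤ 1.1052 := by
      by_contra hcon
      push_neg at hcon
      have h3 : (1.1052:ℝ)^(10:ℕ) < (Real.exp 0.1)^(10:ℕ) :=
        pow_lt_pow_left₀ hcon (by norm_num) (by norm_num)
      have h4 : (Real.exp 0.1)^(10:ℕ) = Real.exp 1 := by
        rw [← Real.exp_nat_mul]; norm_num
      have h5 := Real.exp_one_lt_d9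
      rw [h4] at h3
      norm_num at h3 h5
      linarith
    linarith
  have hexpge1 : 1 ≤ Real.exp ε := Real.one_le_exp hε0
  have hδγ : δ ≤ γ^4/6 := by
    have hlb2 : 1 ≤ (Real.logb 2 (1/γ))^2 := by nlinarith
    have h6 : (6:ℝ) ≤ 6 * (Real.logb 2 (1/γ))^2 := by nlinarith
    calc δ ≤ γ^4 / (6*(Real.logb 2 (1/γ))^2) := hδ
    _ ≤ γ^4/6 := by
        apply div_le_div_of_nonneg_left (by positivity) (by norm_num) h6
  have hγ3 : γ^3 ≤ 1/8 := by nlinarith [sq_nonneg γ, sq_nonneg (γ - 1/2)]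
  have hδ48 : δ ≤ γ/48 := by nlinarith [mul_le_mul_of_nonneg_left hγ3 (le_of_lt hγ0)]
  have hδabs : δ ≤ 0.0105 := by linarith
  set γ' : ℝ := γ - 2*δ with hγ'def
  have hγ'γ : 23/24 * γ ≤ γ' := by rw [hγ'def]; nlinarith
  have hγ'pos : 0 < γ' := by nlinarith
  have hn0 : 0 < n := by omega
  set i0 : Fin n := ⟨0, by omega⟩ with hi0def
  set ilast : Fin n := ⟨n-1, by omega⟩ with hilastdef
  set Q : Measure Ω := P i0 with hQdef
  haveI hQprob : IsProbabilityMeasure Q := hP i0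
  have key : ∀ i : Fin n, ∃ g : Ω → ℝ, Measurable g ∧ (∀ ω, |g ω| ≤ Real.exp ε - 1) ∧
      ∀ S, MeasurableSet S → |(∫ ω in S, g ω ∂Q) - (((P i) S).toReal - (Q S).toReal)| ≤ δ := by
    intro i
    haveI := hP i
    exact clamp_density (P i) Q ε δ hε0 hδ0 (fun S hS => hind i i0 S hS)
      (fun S hS => hind i0 i S hS)
  choose g hgmeas hgbd hgapprox using key
  have hgmem : ∀ i, MemLp (g i) 2 Q := fun i =>
    MemLp.of_bound (hgmeas i).aestronglyMeasurable (Real.exp ε - 1)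
      (Filter.Eventually.of_forall (fun ω => by simpa using hgbd i ω))
  set vf : Fin n → Ω → ℝ := fun j ω => Set.indicator (E j) (fun _ => (1:ℝ)) ω - 1/2 with hvfdef
  have hvfmeas : ∀ j, Measurable (vf j) := fun j =>
    ((measurable_const.indicator (hE j)).sub measurable_const)
  have hvfbd : ∀ j ω, |vf j ω| ≤ 1/2 := by
    intro j ω
    simp only [hvfdef]
    by_cases h : ω ∈ E j
    · rw [Set.indicator_of_mem h, abs_le]; constructor <;> norm_num
    · rw [Set.indicator_of_notMem h, abs_le]; constructor <;> norm_num
  have hvfmem : ∀ j, MemLp (vf j) 2 Q := fun j =>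
    MemLp.of_bound (hvfmeas j).aestronglyMeasurable (1/2)
      (Filter.Eventually.of_forall (fun ω => by simpa using hvfbd j ω))
  set κ : Fin n → ℝ := fun j => ((Q (E j)).toReal - c) with hκdef
  set toF : Lp ℝ 2 Q → ℝ → WithLp 2 ((Lp ℝ 2 Q) × ℝ) :=
    fun x r => (WithLp.equiv 2 ((Lp ℝ 2 Q) × ℝ)).symm (x, r) with htoFdef
  have hinnerF : ∀ (x1 x2 : Lp ℝ 2 Q) (r1 r2 : ℝ),
      ⟪toF x1 r1, toF x2 r2⟫ = ⟪x1, x2⟫ + r1*r2 := by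
    intro x1 x2 r1 r2
    rw [htoFdef]
    simp only [WithLp.prod_inner_apply, WithLp.toLp_fst, WithLp.toLp_snd]
    simp [RCLike.inner_apply, mul_comm]
  set uu : ℕ → WithLp 2 ((Lp ℝ 2 Q) × ℝ) :=
    fun a => if h : a < n then toF ((hgmem ⟨a,h⟩).toLp (g ⟨a,h⟩)) 0.15 else 0 with huudef
  set vv : ℕ → WithLp 2 ((Lp ℝ 2 Q) × ℝ) :=
    fun b => if h : b < n then toF ((hvfmem ⟨b,h⟩).toLp (vf ⟨b,h⟩)) (κ ⟨b,h⟩ / 0.15) else 0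
    with hvvdef
  -- integral computations
  have hgint : ∀ i : Fin n, Integrable (g i) Q :=
    fun i => integrable_of_bdd (hgmeas i) _ (hgbd i)
  have hgvint : ∀ i j : Fin n, ∫ ω, g i ω * vf j ω ∂Q
      = (∫ ω in E j, g i ω ∂Q) - (1/2) * ∫ ω, g i ω ∂Q := by
    intro i j
    have h1 : (fun ω => g i ω * vf j ω)
        = fun ω => (Set.indicator (E j) (g i) ω) - (1/2) * g i ω := by
      funext ω
      by_cases h : ω ∈ E j
      · simp [hvfdef, Set.indicator_of_mem h]; ring
      · simp [hvfdef, Set.indicator_of_notMem h]; ring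
    rw [h1, integral_sub ((hgint i).indicator (hE j)) ((hgint i).const_mul _),
      integral_indicator (hE j), integral_const_mul]
  have hguniv : ∀ i : Fin n, |∫ ω, g i ω ∂Q| ≤ δ := by
    intro i
    have h := hgapprox i Set.univ MeasurableSet.univ
    haveI := hP i
    rw [Measure.restrict_univ] at h
    simpa using h
  -- the inner product values
  have hinnerUV : ∀ (a b : ℕ) (ha : a < n) (hb : b < n),
      ⟪uu a, vv b⟫ = (∫ ω in E ⟨b,hb⟩, g ⟨a,ha⟩ ω ∂Q)
        - (1/2) * (∫ ω, g ⟨a,ha⟩ ω ∂Q) + κ ⟨b,hb⟩ := by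
    intro a b ha hb
    rw [huudef, hvvdef]
    simp only [dif_pos ha, dif_pos hb]
    rw [hinnerF, inner_toLp, hgvint]
    have : (0.15 : ℝ) * (κ ⟨b,hb⟩ / 0.15) = κ ⟨b,hb⟩ := by
      field_simp
    rw [this]
  -- margin hypotheses
  have hup : ∀ a b : ℕ, 0 < a → a < n-1 → 0 < b → b < n-1 → a < b → γ' ≤ ⟪uu a, vv b⟫ := by
    intro a b ha0 ha1 hb0 hb1 hab
    have ha : a < n := by omega
    have hb : b < n := by omega
    rw [hinnerUV a b ha hb]
    have h1 := hgapprox ⟨a,ha⟩ (E ⟨b,hb⟩) (hE ⟨b,hb⟩)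
    have h2 := hguniv ⟨a,ha⟩
    have h3 : c + γ ≤ ((P ⟨a,ha⟩) (E ⟨b,hb⟩)).toReal := hgt ⟨a,ha⟩ ⟨b,hb⟩ (Fin.mk_lt_mk.2 hab)
    rw [abs_le] at h1 h2
    simp only [hκdef]
    linarith [h1.1, h2.2]
  have hdn : ∀ a b : ℕ, 0 < a → a < n-1 → 0 < b → b < n-1 → b < a → ⟪uu a, vv b⟫ ≤ -γ' := by
    intro a b ha0 ha1 hb0 hb1 hba
    have ha : a < n := by omega
    have hb : b < n := by omega
    rw [hinnerUV a b ha hb]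
    have h1 := hgapprox ⟨a,ha⟩ (E ⟨b,hb⟩) (hE ⟨b,hb⟩)
    have h2 := hguniv ⟨a,ha⟩
    have h3 : ((P ⟨a,ha⟩) (E ⟨b,hb⟩)).toReal ≤ c - γ := hlt ⟨a,ha⟩ ⟨b,hb⟩ (Fin.mk_lt_mk.2 hba)
    rw [abs_le] at h1 h2
    simp only [hκdef]
    linarith [h1.2, h2.1]
  -- κ bounds on interior indices
  have hκbound : ∀ (b:ℕ) (hb : b < n), 0 < b → b < n-1 →
      γ ≤ κ ⟨b, hb⟩ ∧ κ ⟨b, hb⟩ ≤ 0.1157 := by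
    intro b hb hb0 hb1
    have hlow : c + γ ≤ (Q (E ⟨b,hb⟩)).toReal := by
      rw [hQdef]
      exact hgt i0 ⟨b,hb⟩ (by rw [hi0def]; exact Fin.mk_lt_mk.2 (by omega))
    have hupq : (Q (E ⟨b,hb⟩)).toReal ≤ Real.exp ε * ((P ilast) (E ⟨b,hb⟩)).toReal + δ := by
      haveI := hP ilast
      exact toReal_ind Q (P ilast) (E ⟨b,hb⟩) _ δ (le_of_lt (Real.exp_pos ε)) hδ0
        (hind i0 ilast (E ⟨b,hb⟩) (hE ⟨b,hb⟩))
    have hlast : ((P ilast) (E ⟨b,hb⟩)).toReal ≤ c - γ := by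
      refine hlt ilast ⟨b,hb⟩ ?_
      rw [hilastdef]
      exact Fin.mk_lt_mk.2 (by omega)
    have hc1 : c ≤ 1 := hc.2
    have hc0 : 0 ≤ c := hc.1
    constructor
    · simp only [hκdef]; linarith
    · simp only [hκdef]
      have hmul : Real.exp ε * ((P ilast) (E ⟨b,hb⟩)).toReal ≤ Real.exp ε * (c - γ) :=
        mul_le_mul_of_nonneg_left hlast (by positivity)
      nlinarith [hmul, hupq, hexp1, hexpge1, hδabs, hγ0]
  -- norm bounds
  have hinnerVV : ∀ (b:ℕ) (hb : b<n), ⟪vv b, vv b⟫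
      = (∫ ω, vf ⟨b,hb⟩ ω * vf ⟨b,hb⟩ ω ∂Q) + (κ ⟨b,hb⟩/0.15)*(κ ⟨b,hb⟩/0.15) := by
    intro b hb
    rw [hvvdef]; simp only [dif_pos hb]; rw [hinnerF, inner_toLp]
  have hinnerUU : ∀ (a:ℕ) (ha : a<n), ⟪uu a, uu a⟫
      = (∫ ω, g ⟨a,ha⟩ ω * g ⟨a,ha⟩ ω ∂Q) + 0.15*0.15 := by
    intro a ha
    rw [huudef]; simp only [dif_pos ha]; rw [hinnerF, inner_toLp]
  have hvnorm : ∀ b:ℕ, 0<b → b<n-1 → ⟪vv b, vv b⟫ ≤ 0.846 := by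
    intro b hb0 hb1
    have hb : b < n := by omega
    rw [hinnerVV b hb]
    have habs : ∀ ω, |vf ⟨b,hb⟩ ω * vf ⟨b,hb⟩ ω| ≤ 1/4 := by
      intro ω
      rw [abs_mul]
      calc |vf ⟨b,hb⟩ ω| * |vf ⟨b,hb⟩ ω| ≤ (1/2)*(1/2) :=
            mul_le_mul (hvfbd _ _) (hvfbd _ _) (abs_nonneg _) (by norm_num)
      _ = 1/4 := by norm_num
    have hint : ∫ ω, vf ⟨b,hb⟩ ω * vf ⟨b,hb⟩ ω ∂Q ≤ 1/4 := by
      calc ∫ ω, vf ⟨b,hb⟩ ω * vf ⟨b,hb⟩ ω ∂Q ≤ ∫ _, (1/4:ℝ) ∂Q :=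
            integral_mono
              (integrable_of_bdd ((hvfmeas _).mul (hvfmeas _)) _ habs)
              (integrable_const _)
              (fun ω => le_trans (le_abs_self _) (habs ω))
      _ = 1/4 := by simp
    obtain ⟨hκl, hκu⟩ := hκbound b hb hb0 hb1
    have h0κ : 0 ≤ κ ⟨b,hb⟩ := le_trans (le_of_lt hγ0) hκl
    have hκsq : κ ⟨b,hb⟩ * κ ⟨b,hb⟩ ≤ 0.1157*0.1157 :=
      mul_le_mul hκu hκu h0κ (by norm_num)
    have hform : (κ ⟨b,hb⟩/0.15)*(κ ⟨b,hb⟩/0.15) = (κ ⟨b,hb⟩ * κ ⟨b,hb⟩) * (1/0.0225) := by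
      ring
    rw [hform]
    linarith
  have hunorm : ∀ a:ℕ, 0<a → a<n-1 → ⟪uu a, uu a⟫ ≤ 0.0336 := by
    intro a ha0 ha1
    have ha : a < n := by omega
    rw [hinnerUU a ha]
    have hee : 0 ≤ Real.exp ε - 1 := by linarith
    have habs : ∀ ω, |g ⟨a,ha⟩ ω * g ⟨a,ha⟩ ω| ≤ (Real.exp ε - 1)*(Real.exp ε - 1) := by
      intro ω
      rw [abs_mul]
      exact mul_le_mul (hgbd _ _) (hgbd _ _) (abs_nonneg _) hee
    have hint : ∫ ω, g ⟨a,ha⟩ ω * g ⟨a,ha⟩ ω ∂Q ≤ (Real.exp ε - 1)*(Real.exp ε - 1) := by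
      calc ∫ ω, g ⟨a,ha⟩ ω * g ⟨a,ha⟩ ω ∂Q ≤ ∫ _, ((Real.exp ε - 1)*(Real.exp ε - 1):ℝ) ∂Q :=
            integral_mono
              (integrable_of_bdd ((hgmeas _).mul (hgmeas _)) _ habs)
              (integrable_const _)
              (fun ω => le_trans (le_abs_self _) (habs ω))
      _ = (Real.exp ε - 1)*(Real.exp ε - 1) := by simp
    have hesq : (Real.exp ε - 1)*(Real.exp ε - 1) ≤ 0.1052*0.1052 :=
      mul_le_mul (by linarith) (by linarith) hee (by norm_num)
    linarith
  -- apply the perceptron bound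
  have hperc : ∀ k:ℕ, 2^(k+1) ≤ n-1 → (k:ℝ) ≤ 0.0336*0.846/γ'^2 := fun k hk =>
    perceptron_bound uu vv γ' 0.846 0.0336 hγ'pos (n-1) hvnorm hunorm hup hdn k hk
  set K : ℝ := 0.0336*0.846/γ'^2 with hKdef
  have hKpos : 0 ≤ K := by positivity
  set k0 : ℕ := Nat.floor K + 1 with hk0def
  have hnle : n - 1 < 2^(k0+1) := by
    by_contra hcon
    push_neg at hcon
    have h1 := hperc k0 hcon
    have h2 : K < (k0:ℝ) := by
      rw [hk0def]; push_cast
      linarith [Nat.lt_floor_add_one K]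
    linarith
  have hnle2 : n ≤ 2^(k0+1) := by omega
  have hcast : (n:ℝ) ≤ (2:ℝ)^(((k0+1:ℕ)):ℝ) := by
    rw [Real.rpow_natCast]
    exact_mod_cast hnle2
  refine le_trans hcast ?_
  rw [Real.rpow_le_rpow_left_iff (by norm_num : (1:ℝ) < 2)]
  have hfl : (Nat.floor K : ℝ) ≤ K := Nat.floor_le hKpos
  have hexpo : ((k0+1:ℕ):ℝ) ≤ K + 2 := by rw [hk0def]; push_cast; linarith
  refine le_trans hexpo ?_
  have hγ'2 : (23/24*γ)^2 ≤ γ'^2 := by nlinarith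
  have hKle : K ≤ 0.031/γ^2 := by
    rw [hKdef, div_le_div_iff₀ (by positivity) (by positivity)]
    nlinarith [hγ'2]
  have hfin : 0.031/γ^2 + 2 ≤ (1/γ)^2*(Real.logb 2 (1/γ))^2 := by
    have hdp : (1/γ)^2 = 1/γ^2 := by rw [div_pow, one_pow]
    rw [hdp]
    have hlb2 : 1 ≤ (Real.logb 2 (1/γ))^2 := by nlinarith
    have ht4 : (4:ℝ) ≤ 1/γ^2 := hγ2
    have hh : 1/γ^2 * 1 ≤ 1/γ^2 * (Real.logb 2 (1/γ))^2 :=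
      mul_le_mul_of_nonneg_left hlb2 (by positivity)
    rw [mul_one] at hh
    have h31 : (0.031:ℝ)/γ^2 = 0.031*(1/γ^2) := by ring
    rw [h31]
    linarith
  linarith
end

section
/- Jump in the comparison-based vectors: Let k ≥ 1 and let m be a positive integer divisible by k+1. Let X be a finite linearly ordered set with |X| ≥ 2m+1, let Y = {0,…,k}, and let A be a randomized k-list algorithm over samples of size m from X with labels Y such that: (i) A is (0.1, δ)-differentially private with δ ≤ 1/(100k); (ii) A is (1/(100km))-comparison-based on X, witnessed by vectors p^(0),…,p^(m) ∈ [0,1]^Y; (iii) A is a (1/(200k(k+1)), 1/(200k(k+1)))-accurate empirical k-list learner for M_k(X). Then there exists an index i with 0 < i ≤ m such that max_{y ∈ Y} |p^(i)_y − p^(i−1)_y| ≥ 3/(100km). -/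
open MeasureTheory
open scoped ENNReal

namespace Stmt4

/-- A `k`-list hypothesis on `X` with label set `Fin ℓ`: every point is mapped to a
subset of labels of size `k`. -/
abbrev Hyp (X : Type) (ℓ k : ℕ) := {h : X → Finset (Fin ℓ) // ∀ x, (h x).card = k}

/-- `A_{S,x}(y) = Pr_{h ∼ p}[y ∉ h(x)]`. -/
noncomputable def errP {X : Type} {ℓ k : ℕ} (p : PMF (Hyp X ℓ k)) (x : X) (y : Fin ℓ) : ℝ :=
  (p.toOuterMeasure {h | y ∉ h.1 x}).toReal

/-- Two samples are neighbors if they differ in exactly one coordinate. -/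
def Neighbor {α : Type} {m : ℕ} (S S' : Fin m → α) : Prop :=
  ∃ i, S i ≠ S' i ∧ ∀ j, j ≠ i → S j = S' j

/-- `(ε,δ)`-differential privacy of a randomized algorithm. -/
def IsDP {α H : Type} {m : ℕ} (A : (Fin m → α) → PMF H) (ε δ : ℝ) : Prop :=
  ∀ S S' : Fin m → α, Neighbor S S' → ∀ E : Set H,
    (A S).toOuterMeasure E ≤ ENNReal.ofReal (Real.exp ε) * (A S').toOuterMeasure E +
      ENNReal.ofReal δ

variable {X : Type} [LinearOrder X]

/-- `S` is increasing balanced: points strictly increasing, labels nondecreasing, and every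
label occurs exactly `m / ℓ` times. -/
def IncreasingBalanced {m ℓ : ℕ} (S : Fin m → X × Fin ℓ) : Prop :=
  StrictMono (fun i => (S i).1) ∧ Monotone (fun i => (S i).2) ∧
    ∀ y : Fin ℓ, (Finset.univ.filter (fun i => (S i).2 = y)).card = m / ℓ

/-- `loc_S(x) = #{j : x_j < x}`. -/
def locS {m ℓ : ℕ} (S : Fin m → X × Fin ℓ) (x : X) : ℕ :=
  (Finset.univ.filter (fun i => (S i).1 < x)).card

/-- `A` is `γ`-comparison-based on `X'`, witnessed by the vectors `p 0, …, p m ∈ [0,1]^Y`. -/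
def IsCBWith {m ℓ k : ℕ} (A : (Fin m → X × Fin ℓ) → PMF (Hyp X ℓ k)) (X' : Set X)
    (γ : ℝ) (p : ℕ → Fin ℓ → ℝ) : Prop :=
  ∀ S : Fin m → X × Fin ℓ, IncreasingBalanced S → (∀ i, (S i).1 ∈ X') →
    ∀ x ∈ X', ∀ y : Fin ℓ, |errP (A S) x y - p (locS S x) y| ≤ γ

/-- `A` is `γ`-comparison-based on `X'`. -/
def IsCB {m ℓ k : ℕ} (A : (Fin m → X × Fin ℓ) → PMF (Hyp X ℓ k)) (X' : Set X) (γ : ℝ) : Prop :=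
  ∃ p : ℕ → Fin ℓ → ℝ, (∀ i y, i ≤ m → p i y ∈ Set.Icc (0:ℝ) 1) ∧ IsCBWith A X' γ p

/-- Empirical loss of `h` on the sample `S`. -/
noncomputable def empLoss {m ℓ k : ℕ} (S : Fin m → X × Fin ℓ) (h : Hyp X ℓ k) : ℝ :=
  ((Finset.univ.filter (fun i => (S i).2 ∉ h.1 (S i).1)).card : ℝ) / m

/-- `S` is realizable by a monotone function into `Fin (k+1)`. -/
def RealizableMono {m k : ℕ} (S : Fin m → X × Fin (k+1)) : Prop :=
  ∃ f : X → Fin (k+1), Monotone f ∧ ∀ i, (S i).2 = f (S i).1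

/-- `A` is an `(α,β)`-accurate empirical `k`-list learner for the class `M_k(X)` of monotone
functions from `X` to `{0,…,k}`. -/
def IsEmpLearner {m k : ℕ} (A : (Fin m → X × Fin (k+1)) → PMF (Hyp X (k+1) k))
    (α β : ℝ) : Prop :=
  ∀ S : Fin m → X × Fin (k+1), RealizableMono S →
    (A S).toOuterMeasure {h | α ≤ empLoss S h} ≤ ENNReal.ofReal β

end Stmt4

namespace Stmt4

lemma toOM_le_one {H : Type} (q : PMF H) (E : Set H) : q.toOuterMeasure E ≤ 1 := by
  rw [PMF.toOuterMeasure_apply]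
  calc ∑' h, E.indicator q h ≤ ∑' h, q h :=
        ENNReal.tsum_le_tsum (fun h => Set.indicator_le_self _ _ h)
    _ = 1 := q.tsum_coe

lemma sum_errP_eq_one {X : Type} {k : ℕ} (q : PMF (Hyp X (k+1) k)) (x : X) :
    ∑ y : Fin (k+1), errP q x y = 1 := by
  have key : ∑ y : Fin (k+1), q.toOuterMeasure {h : Hyp X (k+1) k | y ∉ h.1 x} = 1 := by
    simp only [PMF.toOuterMeasure_apply]
    rw [← Summable.tsum_finsetSum (fun y _ => ENNReal.summable)]
    rw [← q.tsum_coe]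
    refine tsum_congr fun h => ?_
    have hc : ((h.1 x)ᶜ : Finset (Fin (k+1))).card = 1 := by
      rw [Finset.card_compl, h.2 x]
      simp
    calc ∑ y : Fin (k+1), Set.indicator {h' : Hyp X (k+1) k | y ∉ h'.1 x} q h
        = ∑ y : Fin (k+1), if y ∈ ((h.1 x)ᶜ : Finset (Fin (k+1))) then q h else 0 := by
          refine Finset.sum_congr rfl fun y _ => ?_
          simp [Set.indicator_apply, Finset.mem_compl]
      _ = ∑ _y ∈ ((h.1 x)ᶜ : Finset (Fin (k+1))), q h := by
          rw [Finset.sum_ite_mem, Finset.univ_inter]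
      _ = q h := by rw [Finset.sum_const, hc, one_smul]
  have hfin : ∀ y : Fin (k+1), q.toOuterMeasure {h : Hyp X (k+1) k | y ∉ h.1 x} ≠ ∞ :=
    fun y => ((toOM_le_one q _).trans_lt ENNReal.one_lt_top).ne
  unfold errP
  rw [← ENNReal.toReal_sum (fun y _ => hfin y), key, ENNReal.toReal_one]

lemma sum_errP_le {X : Type} [LinearOrder X] {k m : ℕ} (q : PMF (Hyp X (k+1) k))
    (S : Fin m → X × Fin (k+1)) (α β : ℝ) (hα : 0 ≤ α) (hβ : 0 ≤ β)
    (hacc : q.toOuterMeasure {h : Hyp X (k+1) k | α ≤ empLoss S h} ≤ ENNReal.ofReal β) :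
    ∑ i : Fin m, errP q (S i).1 (S i).2 ≤ m * α + m * β := by
  classical
  set B : Set (Hyp X (k+1) k) := {h | α ≤ empLoss S h} with hB
  set E : Fin m → Set (Hyp X (k+1) k) := fun i => {h | (S i).2 ∉ h.1 (S i).1} with hE
  have hmα : 0 ≤ (m:ℝ) * α := by positivity
  have key : ∑ i : Fin m, q.toOuterMeasure (E i) ≤
      ENNReal.ofReal ((m:ℝ) * α) + m * ENNReal.ofReal β := by
    have h1 : ∀ i, q.toOuterMeasure (E i) ≤ q.toOuterMeasure (E i ∩ Bᶜ) + ENNReal.ofReal β := by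
      intro i
      have hsub : E i ⊆ (E i ∩ Bᶜ) ∪ B := by
        intro h hh
        by_cases hb : h ∈ B
        · exact Or.inr hb
        · exact Or.inl ⟨hh, hb⟩
      calc q.toOuterMeasure (E i) ≤ q.toOuterMeasure ((E i ∩ Bᶜ) ∪ B) := measure_mono hsub
        _ ≤ q.toOuterMeasure (E i ∩ Bᶜ) + q.toOuterMeasure B := measure_union_le _ _
        _ ≤ _ := add_le_add_right hacc _
    have h2 : ∑ i : Fin m, q.toOuterMeasure (E i ∩ Bᶜ) ≤ ENNReal.ofReal ((m:ℝ) * α) := by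
      simp only [PMF.toOuterMeasure_apply]
      rw [← Summable.tsum_finsetSum (fun (i : Fin m) _ => ENNReal.summable)]
      have hpt : ∀ h, ∑ i : Fin m, (E i ∩ Bᶜ).indicator q h ≤ ENNReal.ofReal ((m:ℝ)*α) * q h := by
        intro h
        by_cases hb : h ∈ B
        · have hz : ∀ i : Fin m, (E i ∩ Bᶜ).indicator q h = 0 := by
            intro i
            apply Set.indicator_of_notMem
            rintro ⟨-, hc⟩; exact hc hb
          simp [hz]
        · have hlt : empLoss S h < α := not_le.1 hb
          have hcard : ((Finset.univ.filter (fun i : Fin m => (S i).2 ∉ h.1 (S i).1)).card : ℝ)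
              ≤ (m:ℝ) * α := by
            rcases Nat.eq_zero_or_pos m with hm0 | hm0
            · subst hm0; simp
            · have hmpos : (0:ℝ) < m := by exact_mod_cast hm0
              unfold empLoss at hlt
              rw [div_lt_iff₀ hmpos] at hlt
              linarith [hlt]
          calc ∑ i : Fin m, (E i ∩ Bᶜ).indicator q h
              = ∑ i : Fin m, if (S i).2 ∉ h.1 (S i).1 then q h else 0 := by
                refine Finset.sum_congr rfl fun i _ => ?_
                rw [Set.indicator_apply]
                simp only [hE, Set.mem_inter_iff, Set.mem_setOf_eq, Set.mem_compl_iff, hb,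
                  not_false_iff, and_true]
            _ = ((Finset.univ.filter (fun i : Fin m => (S i).2 ∉ h.1 (S i).1)).card : ℕ) • q h := by
                rw [Finset.sum_ite, Finset.sum_const, Finset.sum_const_zero, add_zero]
            _ ≤ ENNReal.ofReal ((m:ℝ)*α) * q h := by
                rw [nsmul_eq_mul]
                refine mul_le_mul_left ?_ _
                calc ((Finset.univ.filter (fun i : Fin m => (S i).2 ∉ h.1 (S i).1)).card : ℝ≥0∞)
                    = ENNReal.ofReal (((Finset.univ.filter
                        (fun i : Fin m => (S i).2 ∉ h.1 (S i).1)).card : ℝ)) := by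
                      rw [ENNReal.ofReal_natCast]
                  _ ≤ ENNReal.ofReal ((m:ℝ)*α) := ENNReal.ofReal_le_ofReal hcard
      calc ∑' h, ∑ i : Fin m, (E i ∩ Bᶜ).indicator q h
          ≤ ∑' h, ENNReal.ofReal ((m:ℝ)*α) * q h := ENNReal.tsum_le_tsum hpt
        _ = ENNReal.ofReal ((m:ℝ)*α) * ∑' h, q h := ENNReal.tsum_mul_left
        _ = ENNReal.ofReal ((m:ℝ)*α) := by rw [q.tsum_coe, mul_one]
    calc ∑ i : Fin m, q.toOuterMeasure (E i)
        ≤ ∑ i : Fin m, (q.toOuterMeasure (E i ∩ Bᶜ) + ENNReal.ofReal β) :=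
          Finset.sum_le_sum fun i _ => h1 i
      _ = (∑ i : Fin m, q.toOuterMeasure (E i ∩ Bᶜ)) + m * ENNReal.ofReal β := by
          rw [Finset.sum_add_distrib, Finset.sum_const, Finset.card_univ, Fintype.card_fin,
            nsmul_eq_mul]
      _ ≤ _ := add_le_add_left h2 _
  have hfinE : ∀ i : Fin m, q.toOuterMeasure (E i) ≠ ∞ :=
    fun i => ((toOM_le_one q _).trans_lt ENNReal.one_lt_top).ne
  have hRfin : ENNReal.ofReal ((m:ℝ) * α) + m * ENNReal.ofReal β ≠ ∞ := by
    refine ENNReal.add_ne_top.2 ⟨ENNReal.ofReal_ne_top, ?_⟩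
    exact ENNReal.mul_ne_top (ENNReal.natCast_ne_top m) ENNReal.ofReal_ne_top
  have hmono := ENNReal.toReal_mono hRfin key
  rw [ENNReal.toReal_sum (fun i _ => hfinE i)] at hmono
  have hR : (ENNReal.ofReal ((m:ℝ) * α) + (m:ℝ≥0∞) * ENNReal.ofReal β).toReal
      = (m:ℝ) * α + (m:ℝ) * β := by
    rw [ENNReal.toReal_add ENNReal.ofReal_ne_top
      (ENNReal.mul_ne_top (ENNReal.natCast_ne_top m) ENNReal.ofReal_ne_top),
      ENNReal.toReal_ofReal hmα, ENNReal.toReal_mul, ENNReal.toReal_natCast,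
      ENNReal.toReal_ofReal hβ]
  rw [hR] at hmono
  exact hmono

lemma numeric_aux (K M : ℝ) (hK : 1 ≤ K) (hM : K + 1 ≤ M)
    (h : 1 - (K+1)*(1/(100*K*M)) ≤
      (K+1)*((K+1)*(2*(1/(200*K*(K+1))) + 1/(100*K*M)) + M*(3/(100*K*M)))) : False := by
  have hK0 : (0:ℝ) < K := by linarith
  have hM0 : (0:ℝ) < M := by linarith
  have hK1 : (0:ℝ) < K + 1 := by linarith
  have e1 : (K+1)*(1/(100*K*M)) ≤ 1/50 := by
    rw [mul_one_div, div_le_div_iff₀ (by positivity) (by norm_num)]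
    nlinarith
  have e2 : (K+1)*(2*(1/(200*K*(K+1)))) = 1/(100*K) := by
    field_simp
    ring
  have e3 : M*(3/(100*K*M)) = 3/(100*K) := by
    field_simp
  have e4 : (K+1)*(1/(100*K*M)) ≤ 1/(100*K) := by
    rw [mul_one_div, div_le_div_iff₀ (by positivity) (by positivity)]
    nlinarith
  have e5 : (K+1)*(1/(100*K)) ≤ 2/100 := by
    rw [mul_one_div, div_le_div_iff₀ (by positivity) (by norm_num)]
    nlinarith
  have h2 : (K+1)*((K+1)*(2*(1/(200*K*(K+1))) + 1/(100*K*M)) + M*(3/(100*K*M)))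
      ≤ (K+1)*(5*(1/(100*K))) := by
    have hin : (K+1)*(2*(1/(200*K*(K+1))) + 1/(100*K*M)) + M*(3/(100*K*M))
        ≤ 5*(1/(100*K)) := by
      rw [mul_add, e2, e3]
      have h3' : 3/(100*K) = 3*(1/(100*K)) := by ring
      rw [h3']
      linarith [e4]
    nlinarith [hin]
  have h3 : (K+1)*(5*(1/(100*K))) ≤ 10/100 := by nlinarith [e5]
  linarith

/-- Jump in the comparison-based vectors: for a private comparison-based accurate empirical
`k`-list learner of monotone functions, two consecutive witnessing vectors differ by at least
`3/(100km)` in some coordinate. -/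
theorem stmt4 (k m : ℕ) (hk : 1 ≤ k) (hm : 0 < m) (hdvd : (k+1) ∣ m)
    (X : Type) [Fintype X] [LinearOrder X] (hX : 2*m + 1 ≤ Fintype.card X)
    (δ : ℝ) (hδ0 : 0 ≤ δ) (hδ : δ ≤ 1 / (100*(k:ℝ)))
    (A : (Fin m → X × Fin (k+1)) → PMF (Hyp X (k+1) k))
    (hDP : IsDP A 0.1 δ)
    (p : ℕ → Fin (k+1) → ℝ) (hp : ∀ i y, i ≤ m → p i y ∈ Set.Icc (0:ℝ) 1)
    (hCB : IsCBWith A (Set.univ : Set X) (1/(100*(k:ℝ)*(m:ℝ))) p)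
    (hEL : IsEmpLearner A (1/(200*(k:ℝ)*((k:ℝ)+1))) (1/(200*(k:ℝ)*((k:ℝ)+1)))) :
    ∃ i : ℕ, 0 < i ∧ i ≤ m ∧ ∃ y : Fin (k+1), 3/(100*(k:ℝ)*(m:ℝ)) ≤ |p i y - p (i-1) y| := by
  classical
  by_contra hcon
  push_neg at hcon
  obtain ⟨n, hmn⟩ := hdvd
  have hn : 0 < n := by
    rcases Nat.eq_zero_or_pos n with h | h
    · subst h; simp at hmn; omega
    · exact h
  have hk1 : (1:ℝ) ≤ (k:ℝ) := by exact_mod_cast hk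
  have hkpos : (0:ℝ) < k := by linarith
  have hmpos : (0:ℝ) < m := by exact_mod_cast hm
  have hmkN : k + 1 ≤ m := by
    calc k + 1 ≤ (k+1)*n := Nat.le_mul_of_pos_right _ hn
      _ = m := hmn.symm
  have hmk : (k:ℝ) + 1 ≤ (m:ℝ) := by exact_mod_cast hmkN
  set γ : ℝ := 1/(100*(k:ℝ)*(m:ℝ)) with hγ
  set c : ℝ := 3/(100*(k:ℝ)*(m:ℝ)) with hc
  set α : ℝ := 1/(200*(k:ℝ)*((k:ℝ)+1)) with hα
  have hγpos : 0 < γ := by rw [hγ]; positivity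
  have hcpos : 0 < c := by rw [hc]; positivity
  have hαpos : 0 < α := by rw [hα]; positivity
  -- build the sample
  have hmle : m ≤ Fintype.card X := by omega
  obtain ⟨s, -, hs⟩ := Finset.exists_subset_card_eq (s := (Finset.univ : Finset X)) (n := m)
    (by simpa [Finset.card_univ] using hmle)
  set e : Fin m ↪o X := s.orderEmbOfFin hs with he_def
  have he : StrictMono (fun i : Fin m => e i) := e.strictMono
  have hy : ∀ i : Fin m, (i:ℕ)/n < k+1 := by
    intro i
    rw [Nat.div_lt_iff_lt_mul hn]
    have h1 := i.isLt
    omega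
  set S : Fin m → X × Fin (k+1) := fun i => (e i, ⟨(i:ℕ)/n, hy i⟩) with hS
  have hS1 : ∀ i : Fin m, (S i).1 = e i := fun i => rfl
  -- location of sample points
  have hloc : ∀ i : Fin m, locS S (e i) = (i:ℕ) := by
    intro i
    show (Finset.univ.filter (fun j : Fin m => (S j).1 < e i)).card = (i:ℕ)
    have hfe : (Finset.univ.filter (fun j : Fin m => (S j).1 < e i)) = Finset.Iio i := by
      ext j
      simp only [hS, Finset.mem_filter, Finset.mem_univ, true_and, Finset.mem_Iio]
      exact e.lt_iff_lt
    rw [hfe, Fin.card_Iio]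
  have hmdiv : m / (k+1) = n := by
    rw [hmn]; exact Nat.mul_div_cancel_left n (Nat.succ_pos k)
  -- increasing balanced
  have hbal : IncreasingBalanced S := by
    refine ⟨he, ?_, ?_⟩
    · intro a b hab
      show ((⟨(a:ℕ)/n, hy a⟩ : Fin (k+1)) ≤ ⟨(b:ℕ)/n, hy b⟩)
      rw [Fin.mk_le_mk]
      exact Nat.div_le_div_right hab
    · intro b
      rw [hmdiv]
      have h1 : (Finset.univ.filter (fun i : Fin m => (S i).2 = b)).card
          = ((Finset.range m).filter (fun j => j/n = (b:ℕ))).card := by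
        apply Finset.card_bij (fun (i : Fin m) _ => (i:ℕ))
        · intro a ha
          simp only [hS, Finset.mem_filter, Finset.mem_univ, true_and] at ha
          simp only [Finset.mem_filter, Finset.mem_range]
          exact ⟨a.isLt, congrArg Fin.val ha⟩
        · intro a _ a' _ hval
          exact Fin.val_injective hval
        · intro j hj
          simp only [Finset.mem_filter, Finset.mem_range] at hj
          refine ⟨⟨j, hj.1⟩, ?_, rfl⟩
          simp only [hS, Finset.mem_filter, Finset.mem_univ, true_and]
          exact Fin.ext hj.2
      have h2 : ((Finset.range m).filter (fun j => j/n = (b:ℕ)))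
          = Finset.Ico ((b:ℕ)*n) ((b:ℕ)*n + n) := by
        ext j
        simp only [Finset.mem_filter, Finset.mem_range, Finset.mem_Ico]
        constructor
        · rintro ⟨hjm, hdivj⟩
          constructor
          · calc (b:ℕ)*n = (j/n)*n := by rw [hdivj]
              _ ≤ j := Nat.div_mul_le_self j n
          · have hlt1 : j/n < (b:ℕ)+1 := by omega
            have hlt2 := (Nat.div_lt_iff_lt_mul hn).1 hlt1
            rw [Nat.add_mul, Nat.one_mul] at hlt2
            exact hlt2
        · rintro ⟨h1', h2'⟩
          have hbk : (b:ℕ) ≤ k := Nat.lt_succ_iff.1 b.isLt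
          have hjm : j < m := by
            have hmm : (b:ℕ)*n + n ≤ (k+1)*n := by
              have h3 : ((b:ℕ)+1)*n ≤ (k+1)*n := Nat.mul_le_mul_right n (by omega)
              rw [Nat.add_mul, Nat.one_mul] at h3
              exact h3
            omega
          refine ⟨hjm, Nat.div_eq_of_lt_le h1' ?_⟩
          rw [Nat.succ_mul]
          omega
      rw [h1, h2, Nat.card_Ico]
      omega
  -- realizability
  have hlocmono : Monotone (fun x => locS S x) := by
    intro a b hab
    apply Finset.card_le_card
    intro j hj
    simp only [Finset.mem_filter, Finset.mem_univ, true_and] at hj ⊢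
    exact lt_of_lt_of_le hj hab
  have hreal : RealizableMono S := by
    refine ⟨fun x => ⟨min k (locS S x / n), Nat.lt_succ_of_le (min_le_left _ _)⟩, ?_, ?_⟩
    · intro a b hab
      rw [Fin.mk_le_mk]
      exact min_le_min le_rfl (Nat.div_le_div_right (hlocmono hab))
    · intro i
      apply Fin.ext
      show (i:ℕ)/n = min k (locS S ((S i).1) / n)
      rw [hS1 i, hloc i]
      exact (min_eq_right (Nat.lt_succ_iff.1 (hy i))).symm
  -- comparison-based at the sample points
  have hCBi : ∀ i : Fin m, ∀ y : Fin (k+1), |errP (A S) (e i) y - p (i:ℕ) y| ≤ γ := by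
    intro i y
    have h := hCB S hbal (fun j => Set.mem_univ _) (e i) (Set.mem_univ _) y
    rwa [hloc i] at h
  -- accuracy
  have hacc := hEL S hreal
  have hsum : ∑ i : Fin m, errP (A S) (S i).1 (S i).2 ≤ m * α + m * α :=
    sum_errP_le (A S) S α α hαpos.le hαpos.le hacc
  have hsump : ∑ i : Fin m, p (i:ℕ) ((S i).2) ≤ m * (2*α + γ) := by
    have h1 : ∀ i : Fin m, p (i:ℕ) ((S i).2) ≤ errP (A S) (S i).1 (S i).2 + γ := by
      intro i
      have h2 := abs_le.1 (hCBi i (S i).2)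
      rw [hS1 i]
      linarith [h2.1]
    calc ∑ i : Fin m, p (i:ℕ) ((S i).2)
        ≤ ∑ i : Fin m, (errP (A S) (S i).1 (S i).2 + γ) := Finset.sum_le_sum fun i _ => h1 i
      _ = (∑ i : Fin m, errP (A S) (S i).1 (S i).2) + m * γ := by
          rw [Finset.sum_add_distrib, Finset.sum_const, Finset.card_univ, Fintype.card_fin,
            nsmul_eq_mul]
      _ ≤ m * α + m * α + m * γ := by linarith [hsum]
      _ = m * (2*α + γ) := by ring
  -- in each block some p-value is small
  have hblock : ∀ b : Fin (k+1), ∃ i : Fin m, p (i:ℕ) b ≤ ((k:ℝ)+1)*(2*α+γ) := by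
    intro b
    have hcardblk : (Finset.univ.filter (fun i : Fin m => (S i).2 = b)).card = n := by
      have hb2 := hbal.2.2 b
      rwa [hmdiv] at hb2
    have hne : (Finset.univ.filter (fun i : Fin m => (S i).2 = b)).Nonempty :=
      Finset.card_pos.1 (by omega)
    have hsumblk : ∑ i ∈ Finset.univ.filter (fun i : Fin m => (S i).2 = b),
        p (i:ℕ) ((S i).2) ≤ m * (2*α+γ) := by
      refine le_trans (Finset.sum_le_sum_of_subset_of_nonneg (Finset.subset_univ _) ?_) hsump
      intro i _ _
      exact (hp (i:ℕ) ((S i).2) i.isLt.le).1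
    have havg : ∑ i ∈ Finset.univ.filter (fun i : Fin m => (S i).2 = b), p (i:ℕ) ((S i).2)
        ≤ ∑ _i ∈ Finset.univ.filter (fun i : Fin m => (S i).2 = b), ((k:ℝ)+1)*(2*α+γ) := by
      rw [Finset.sum_const, hcardblk, nsmul_eq_mul]
      have hmr : ((m:ℝ)) = ((k:ℝ)+1) * (n:ℝ) := by exact_mod_cast hmn
      calc ∑ i ∈ Finset.univ.filter (fun i : Fin m => (S i).2 = b), p (i:ℕ) ((S i).2)
          ≤ m * (2*α+γ) := hsumblk
        _ = (n:ℝ) * (((k:ℝ)+1)*(2*α+γ)) := by rw [hmr]; ring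
    obtain ⟨i, hi, hle⟩ := Finset.exists_le_of_sum_le hne havg
    have hib : (S i).2 = b := (Finset.mem_filter.1 hi).2
    exact ⟨i, by rwa [hib] at hle⟩
  -- no-jump travel bound
  have htravel : ∀ i : ℕ, i ≤ m → ∀ y : Fin (k+1), |p i y - p 0 y| ≤ (i:ℝ) * c := by
    intro i
    induction i with
    | zero => intro _ y; simp
    | succ j ih =>
      intro hj y
      have h1 := hcon (j+1) (Nat.succ_pos j) hj y
      simp only [Nat.add_sub_cancel] at h1
      have h2 := ih (by omega) y
      have habs : |p (j+1) y - p 0 y| ≤ |p (j+1) y - p j y| + |p j y - p 0 y| :=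
        abs_sub_le _ _ _
      have hcast : (((j+1 : ℕ)):ℝ) = (j:ℝ) + 1 := by push_cast; ring
      rw [hcast]
      have hexp : ((j:ℝ) + 1) * c = (j:ℝ)*c + c := by ring
      rw [hexp]
      linarith [h1, h2, habs]
  -- lower bound on ∑ p 0
  have hlower : 1 - ((k:ℝ)+1)*γ ≤ ∑ b : Fin (k+1), p 0 b := by
    have h1 : ∑ y : Fin (k+1), errP (A S) (e ⟨0, hm⟩) y = 1 := sum_errP_eq_one (A S) _
    have h2 : ∀ y : Fin (k+1), errP (A S) (e ⟨0, hm⟩) y ≤ p 0 y + γ := by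
      intro y
      have h3 := abs_le.1 (hCBi ⟨0, hm⟩ y)
      linarith [h3.2]
    have h3 : (1:ℝ) ≤ ∑ y : Fin (k+1), (p 0 y + γ) := by
      rw [← h1]; exact Finset.sum_le_sum fun y _ => h2 y
    rw [Finset.sum_add_distrib, Finset.sum_const, Finset.card_univ, Fintype.card_fin,
      nsmul_eq_mul] at h3
    push_cast at h3
    linarith
  -- upper bound on ∑ p 0
  have hupper : ∑ b : Fin (k+1), p 0 b ≤ ((k:ℝ)+1) * (((k:ℝ)+1)*(2*α+γ) + (m:ℝ) * c) := by
    have h1 : ∀ b : Fin (k+1), p 0 b ≤ ((k:ℝ)+1)*(2*α+γ) + (m:ℝ)*c := by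
      intro b
      obtain ⟨i, hle⟩ := hblock b
      have ht := abs_le.1 (htravel (i:ℕ) i.isLt.le b)
      have hic : ((i:ℕ):ℝ) * c ≤ (m:ℝ) * c := by
        have hii : ((i:ℕ):ℝ) ≤ (m:ℝ) := by exact_mod_cast i.isLt.le
        nlinarith [hcpos]
      linarith [ht.1]
    calc ∑ b : Fin (k+1), p 0 b
        ≤ ∑ _b : Fin (k+1), (((k:ℝ)+1)*(2*α+γ) + (m:ℝ)*c) := Finset.sum_le_sum fun b _ => h1 b
      _ = ((k:ℝ)+1) * (((k:ℝ)+1)*(2*α+γ) + (m:ℝ) * c) := by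
          rw [Finset.sum_const, Finset.card_univ, Fintype.card_fin, nsmul_eq_mul]
          push_cast
          ring
  have hkey : 1 - ((k:ℝ)+1)*γ ≤ ((k:ℝ)+1) * (((k:ℝ)+1)*(2*α+γ) + (m:ℝ)*c) :=
    le_trans hlower hupper
  rw [hγ, hα, hc] at hkey
  exact numeric_aux (k:ℝ) (m:ℝ) hk1 hmk hkey


end Stmt4
end

section
/- Almost-correct intervals below the sample are unlikely: Let k ≥ 1, let n ≥ 2, set l = ⌊log² n⌋, let T be a (k+1)-ary mistake tree of depth n, let 0 ≤ d_1 ≤ … ≤ d_m ≤ n−1 be depths, and let A be any randomized k-list algorithm over samples of size m (over the instances of T with labels {0,…,k}). Draw a branch B uniformly at random from {0,…,k}^n, form the sample S(B) = ((v_{d_1}(B), B_{d_1}),…,(v_{d_m}(B), B_{d_m})), and draw h ∼ A(S(B)). Then the probability that there exists an almost-correct interval of length l on B with respect to h starting at depth strictly greater than d_m is at most n·exp(−l/(8(k+1))). -/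
open MeasureTheory
open scoped ENNReal

namespace Stmt10

/-- Instances of the canonical `(k+1)`-ary mistake tree: strings over `{0,…,k}`
(the internal vertices being those of length `< n`). -/
abbrev Inst (k : ℕ) := List (Fin (k+1))

/-- Labels `{0,…,k}`. -/
abbrev Lbl (k : ℕ) := Fin (k+1)

/-- `k`-list hypotheses over the instances of the tree. -/
abbrev HypT (k : ℕ) := {h : Inst k → Finset (Lbl k) // ∀ x, (h x).card = k}

/-- The instance at depth `j` of the branch `B`: the length-`j` prefix of `B`. -/
def vOf {k : ℕ} (B : ℕ → Lbl k) (j : ℕ) : Inst k := (List.range j).map B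

/-- Two samples are neighbors if they differ in exactly one coordinate. -/
def Neighbor {α : Type} {m : ℕ} (S S' : Fin m → α) : Prop :=
  ∃ i, S i ≠ S' i ∧ ∀ j, j ≠ i → S j = S' j

/-- `(ε,δ)`-differential privacy of a randomized algorithm. -/
def IsDP {α H : Type} {m : ℕ} (A : (Fin m → α) → PMF H) (ε δ : ℝ) : Prop :=
  ∀ S S' : Fin m → α, Neighbor S S' → ∀ E : Set H,
    (A S).toOuterMeasure E ≤ ENNReal.ofReal (Real.exp ε) * (A S').toOuterMeasure E +
      ENNReal.ofReal δ

/-- `S` is realizable by the mistake tree with instance map `ρ` and depth `D`: for some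
branch `B` and strictly increasing depths `dep i < D`, the sample point `i` is the instance
at depth `dep i` of `B`, labeled by the branch-label `B (dep i)`. -/
def TReal {k m : ℕ} (ρ : (ℕ → Lbl k) → ℕ → Inst k) (D : ℕ)
    (S : Fin m → Inst k × Lbl k) : Prop :=
  ∃ B : ℕ → Lbl k, ∃ dep : Fin m → ℕ, StrictMono dep ∧
    ∀ i, dep i < D ∧ (S i).1 = ρ B (dep i) ∧ (S i).2 = B (dep i)

/-- The sample `S` extended by the labeled point `(x,y)` is realizable (by a common branch). -/
def ExtReal {k m : ℕ} (ρ : (ℕ → Lbl k) → ℕ → Inst k) (D : ℕ)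
    (S : Fin m → Inst k × Lbl k) (x : Inst k) (y : Lbl k) : Prop :=
  ∃ B : ℕ → Lbl k, ∃ dep : Fin m → ℕ, StrictMono dep ∧
    (∀ i, dep i < D ∧ (S i).1 = ρ B (dep i) ∧ (S i).2 = B (dep i)) ∧
    ∃ j, j < D ∧ x = ρ B j ∧ y = B j

/-- `loc_S(x)`: the number of sample points that are proper ancestors of `x`. -/
def locS {k m : ℕ} (S : Fin m → Inst k × Lbl k) (x : Inst k) : ℕ :=
  (Finset.univ.filter (fun i => (S i).1 ≠ x ∧ (S i).1 <+: x)).card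

/-- The type of the extended sample `S ∪ {(x,y)}`: its labels listed in order of increasing
depth, i.e. `y` inserted at position `loc_S(x)` in the label tuple of `S`. -/
def typeExt {k m : ℕ} (S : Fin m → Inst k × Lbl k) (x : Inst k) (y : Lbl k) : List (Lbl k) :=
  (List.ofFn (fun i => (S i).2)).take (locS S x) ++
    y :: (List.ofFn (fun i => (S i).2)).drop (locS S x)

/-- `A_{S,x}(y) = Pr_{h ∼ A(S)}[y ∉ h(x)]`. -/
noncomputable def err {k m : ℕ} (A : (Fin m → Inst k × Lbl k) → PMF (HypT k))
    (S : Fin m → Inst k × Lbl k) (x : Inst k) (y : Lbl k) : ℝ :=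
  ((A S).toOuterMeasure {h | y ∉ h.1 x}).toReal

/-- `A` has `γ`-comparison-based loss on the mistake tree with instance map `ρ` and depth `D`:
for every realizable sample `S` and compatible instance `x` with (minimal) extension label `y`,
the loss `A_{S,x}(y)` is within `γ` of a quantity depending only on the type of `S ∪ {(x,y)}`
and on `loc_S(x)`. -/
def HasCBLoss {k m : ℕ} (A : (Fin m → Inst k × Lbl k) → PMF (HypT k))
    (ρ : (ℕ → Lbl k) → ℕ → Inst k) (D : ℕ) (γ : ℝ) : Prop :=
  ∃ p : List (Lbl k) → ℕ → ℝ, (∀ t i, p t i ∈ Set.Icc (0:ℝ) 1) ∧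
    ∀ S : Fin m → Inst k × Lbl k, TReal ρ D S → ∀ x y, ExtReal ρ D S x y →
      (∀ y' : Lbl k, y' < y → ¬ ExtReal ρ D S x y') →
      |err A S x y - p (typeExt S x y) (locS S x)| ≤ γ

/-- `A` is an `(α,β)`-accurate empirical `k`-list learner for the mistake tree with instance
map `ρ` and depth `D`. -/
def IsEmpT {k m : ℕ} (A : (Fin m → Inst k × Lbl k) → PMF (HypT k))
    (ρ : (ℕ → Lbl k) → ℕ → Inst k) (D : ℕ) (α β : ℝ) : Prop :=
  ∀ S : Fin m → Inst k × Lbl k, TReal ρ D S →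
    (A S).toOuterMeasure
        {h | α * (m:ℝ) ≤ ((Finset.univ.filter (fun i => (S i).2 ∉ h.1 (S i).1)).card : ℝ)}
      ≤ ENNReal.ofReal β

/-- Extension of a finite branch `B ∈ {0,…,k}^n` to `ℕ`. -/
def Bext {k n : ℕ} (B : Fin n → Lbl k) : ℕ → Lbl k :=
  fun j => if h : j < n then B ⟨j, h⟩ else 0

/-- The sample determined by the branch `B` and the depths `dep`. -/
def smp {k n m : ℕ} (B : Fin n → Lbl k) (dep : Fin m → ℕ) : Fin m → Inst k × Lbl k :=
  fun i => (vOf (Bext B) (dep i), Bext B (dep i))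

/-- An almost-correct interval of length `l` starting at depth `j` on the branch `B`
(inside a tree of depth `n`), with respect to the hypothesis `h`. -/
def AlmostCorrect {k : ℕ} (B : ℕ → Lbl k) (h : HypT k) (n l j : ℕ) : Prop :=
  j + l ≤ n ∧
    (((Finset.range l).filter (fun s => B (j+s) ∉ h.1 (vOf B (j+s)))).card : ℝ)
      ≤ (l:ℝ) / (2*((k:ℝ)+1))

end Stmt10


namespace Stmt10
open Finset

lemma rank_lt {K k : ℕ} (g : Finset (Fin K)) (hg : g.card = k) {a : Fin K} (ha : a ∈ g) :
    (g.filter (fun b => b < a)).card < k := by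
  have hsub : g.filter (fun b => b < a) ⊆ g.erase a := by
    intro x hx
    rcases Finset.mem_filter.mp hx with ⟨hxg, hxa⟩
    exact Finset.mem_erase.mpr ⟨ne_of_lt hxa, hxg⟩
  have h1 : (g.erase a).card < g.card := Finset.card_erase_lt_of_mem ha
  have := Finset.card_le_card hsub
  omega

lemma rank_inj {K : ℕ} (g : Finset (Fin K)) {a b : Fin K} (ha : a ∈ g) (hb : b ∈ g)
    (h : (g.filter (fun x => x < a)).card = (g.filter (fun x => x < b)).card) : a = b := by
  have key : ∀ a b : Fin K, a ∈ g → b ∈ g → a < b →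
      (g.filter (fun x => x < a)).card < (g.filter (fun x => x < b)).card := by
    intro a b ha hb hlt
    apply Finset.card_lt_card
    rw [Finset.ssubset_iff_of_subset]
    · exact ⟨a, Finset.mem_filter.mpr ⟨ha, hlt⟩,
        fun hc => absurd (Finset.mem_filter.mp hc).2 (lt_irrefl a)⟩
    · intro x hx
      rcases Finset.mem_filter.mp hx with ⟨hxg, hxa⟩
      exact Finset.mem_filter.mpr ⟨hxg, lt_trans hxa hlt⟩
  by_contra hne
  rcases lt_or_gt_of_ne hne with hlt | hlt
  · exact absurd h (ne_of_lt (key a b ha hb hlt))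
  · exact absurd h.symm (ne_of_lt (key b a hb ha hlt))

lemma fiber_card {k l : ℕ} (hk : 1 ≤ k)
    (G : (Fin l → Fin (k+1)) → Fin l → Finset (Fin (k+1)))
    (hGcard : ∀ W s, (G W s).card = k)
    (hGdep : ∀ W W' : Fin l → Fin (k+1), ∀ s, (∀ u, u < s → W u = W' u) → G W s = G W' s)
    (T : Finset (Fin l)) :
    (univ.filter (fun W : Fin l → Fin (k+1) =>
        univ.filter (fun s => W s ∉ G W s) = T)).card ≤ k ^ (l - T.card) := by
  classical
  have hcard : k ^ (l - T.card) = Fintype.card ({s : Fin l // s ∉ T} → Fin k) := by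
    rw [Fintype.card_fun, Fintype.card_fin]
    congr 1
    rw [Fintype.card_subtype_compl]
    simp [Fintype.card_coe]
  rw [hcard, ← Finset.card_univ]
  set enc : (Fin l → Fin (k+1)) → ({s : Fin l // s ∉ T} → Fin k) := fun W s =>
    if hmem : W s.1 ∈ G W s.1 then
      ⟨((G W s.1).filter (fun b => b < W s.1)).card, rank_lt _ (hGcard W s.1) hmem⟩
    else ⟨0, hk⟩ with henc_def
  apply Finset.card_le_card_of_injOn enc (fun _ _ => Finset.mem_univ _)
  intro W hW W' hW' henc
  have hWT : univ.filter (fun s => W s ∉ G W s) = T := (Finset.mem_filter.mp hW).2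
  have hW'T : univ.filter (fun s => W' s ∉ G W' s) = T := (Finset.mem_filter.mp hW').2
  by_contra hne
  have hD : (univ.filter (fun s => W s ≠ W' s)).Nonempty := by
    rcases Function.ne_iff.mp hne with ⟨s, hs⟩
    exact ⟨s, Finset.mem_filter.mpr ⟨Finset.mem_univ _, hs⟩⟩
  set s₀ := (univ.filter (fun s => W s ≠ W' s)).min' hD with hs₀def
  have hs₀ : W s₀ ≠ W' s₀ := (Finset.mem_filter.mp ((univ.filter (fun s => W s ≠ W' s)).min'_mem hD)).2
  have hagree : ∀ u, u < s₀ → W u = W' u := by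
    intro u hu
    by_contra hc
    have : s₀ ≤ u := Finset.min'_le (univ.filter (fun s => W s ≠ W' s)) u (Finset.mem_filter.mpr ⟨Finset.mem_univ _, hc⟩)
    exact absurd hu (not_lt.mpr this)
  have hG : G W s₀ = G W' s₀ := hGdep W W' s₀ hagree
  by_cases hT : s₀ ∈ T
  · have h1 : W s₀ ∉ G W s₀ := by
      rw [← hWT] at hT; exact (Finset.mem_filter.mp hT).2
    have h2 : W' s₀ ∉ G W s₀ := by
      rw [← hW'T] at hT
      have := (Finset.mem_filter.mp hT).2
      rwa [← hG] at this
    have hcompl : ((G W s₀)ᶜ : Finset (Fin (k+1))).card = 1 := by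
      rw [Finset.card_compl, hGcard]
      simp
    rcases Finset.card_eq_one.mp hcompl with ⟨a, haeq⟩
    have e1 : W s₀ = a := by
      have : W s₀ ∈ ((G W s₀)ᶜ : Finset (Fin (k+1))) := Finset.mem_compl.mpr h1
      rwa [haeq, Finset.mem_singleton] at this
    have e2 : W' s₀ = a := by
      have : W' s₀ ∈ ((G W s₀)ᶜ : Finset (Fin (k+1))) := Finset.mem_compl.mpr h2
      rwa [haeq, Finset.mem_singleton] at this
    exact hs₀ (e1.trans e2.symm)
  · have h1 : W s₀ ∈ G W s₀ := by
      by_contra hc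
      exact hT (hWT ▸ Finset.mem_filter.mpr ⟨Finset.mem_univ _, hc⟩)
    have h2 : W' s₀ ∈ G W' s₀ := by
      by_contra hc
      exact hT (hW'T ▸ Finset.mem_filter.mpr ⟨Finset.mem_univ _, hc⟩)
    have := congrFun henc ⟨s₀, hT⟩
    rw [henc_def] at this
    simp only [dif_pos h1, dif_pos h2] at this
    have hval : ((G W s₀).filter (fun b => b < W s₀)).card
        = ((G W' s₀).filter (fun b => b < W' s₀)).card := congrArg Fin.val this
    rw [← hG] at hval h2
    exact hs₀ (rank_inj _ h1 h2 hval)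

lemma analytic_bound (k l : ℕ) (hk : 1 ≤ k) :
    (2:ℝ) ^ ((l:ℝ)/(2*((k:ℝ)+1))) * ((1/2:ℝ) + k) ^ l
      ≤ ((k:ℝ)+1) ^ l * Real.exp (-(l:ℝ)/(8*((k:ℝ)+1))) := by
  have hK : (2:ℝ) ≤ (k:ℝ) + 1 := by
    have : (1:ℝ) ≤ (k:ℝ) := by exact_mod_cast hk
    linarith
  have hKpos : (0:ℝ) < (k:ℝ) + 1 := by linarith
  set KR := (k:ℝ) + 1 with hKR
  have h1 : ((1/2:ℝ) + k) = KR * (1 - 1/(2*KR)) := by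
    field_simp [hKR]
    ring
  have h2 : (1 - 1/(2*KR)) ≤ Real.exp (-(1/(2*KR))) := by
    have := Real.add_one_le_exp (-(1/(2*KR)))
    linarith
  have h2n : (0:ℝ) ≤ 1 - 1/(2*KR) := by
    have : 1/(2*KR) ≤ 1/4 := by
      apply div_le_div_of_nonneg_left <;> linarith
    linarith
  have h3 : ((1/2:ℝ) + k) ^ l ≤ KR ^ l * Real.exp (-(l:ℝ)/(2*KR)) := by
    rw [h1, mul_pow]
    apply mul_le_mul_of_nonneg_left _ (by positivity)
    calc (1 - 1/(2*KR)) ^ l ≤ (Real.exp (-(1/(2*KR)))) ^ l := pow_le_pow_left₀ h2n h2 l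
      _ = Real.exp (-(l:ℝ)/(2*KR)) := by
          rw [← Real.exp_nat_mul]
          congr 1
          ring
  have h4 : (2:ℝ) ^ ((l:ℝ)/(2*KR)) = Real.exp (Real.log 2 * ((l:ℝ)/(2*KR))) := by
    rw [Real.rpow_def_of_pos (by norm_num)]
  calc (2:ℝ) ^ ((l:ℝ)/(2*KR)) * ((1/2:ℝ) + k) ^ l
      ≤ (2:ℝ) ^ ((l:ℝ)/(2*KR)) * (KR ^ l * Real.exp (-(l:ℝ)/(2*KR))) := by
        apply mul_le_mul_of_nonneg_left h3 (by positivity)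
    _ = KR ^ l * (Real.exp (Real.log 2 * ((l:ℝ)/(2*KR))) * Real.exp (-(l:ℝ)/(2*KR))) := by
        rw [h4]; ring
    _ ≤ KR ^ l * Real.exp (-(l:ℝ)/(8*KR)) := by
        apply mul_le_mul_of_nonneg_left _ (by positivity)
        rw [← Real.exp_add]
        apply Real.exp_le_exp.mpr
        have hu : (0:ℝ) ≤ (l:ℝ)/(2*KR) := by positivity
        have hlog : Real.log 2 < 0.6931471808 := Real.log_two_lt_d9
        have := mul_le_mul_of_nonneg_right (le_of_lt hlog) hu
        have hKne : KR ≠ 0 := ne_of_gt hKpos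
        have heq : -(l:ℝ)/(8*KR) = -(((l:ℝ)/(2*KR))/4) := by
          field_simp
          ring
        have heq2 : -(l:ℝ)/(2*KR) = -((l:ℝ)/(2*KR)) := by ring
        rw [heq, heq2]
        linarith

lemma count_main {k l : ℕ} (hk : 1 ≤ k)
    (G : (Fin l → Fin (k+1)) → Fin l → Finset (Fin (k+1)))
    (hGcard : ∀ W s, (G W s).card = k)
    (hGdep : ∀ W W' : Fin l → Fin (k+1), ∀ s, (∀ u, u < s → W u = W' u) → G W s = G W' s) :
    ((univ.filter (fun W : Fin l → Fin (k+1) =>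
        ((univ.filter (fun s => W s ∉ G W s)).card : ℝ) ≤ (l:ℝ)/(2*((k:ℝ)+1)))).card : ℝ)
      ≤ ((k:ℝ)+1) ^ l * Real.exp (-(l:ℝ)/(8*((k:ℝ)+1))) := by
  classical
  set t : ℝ := (l:ℝ)/(2*((k:ℝ)+1)) with ht_def
  have ht : 0 ≤ t := by positivity
  set bigS := univ.filter (fun W : Fin l → Fin (k+1) =>
      ((univ.filter (fun s => W s ∉ G W s)).card : ℝ) ≤ t) with hbigS
  set tfil := (univ : Finset (Finset (Fin l))).filter (fun T => (T.card : ℝ) ≤ t) with htfil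
  -- fiberwise card
  have hfib : bigS.card = ∑ T ∈ tfil, (bigS.filter
      (fun W => univ.filter (fun s => W s ∉ G W s) = T)).card := by
    apply Finset.card_eq_sum_card_fiberwise
    intro W hW
    rw [Finset.mem_coe] at hW
    rw [htfil, Finset.mem_coe, Finset.mem_filter]
    exact ⟨Finset.mem_univ _, (Finset.mem_filter.mp hW).2⟩
  have hstep1 : (bigS.card : ℝ) ≤ ∑ T ∈ tfil, ((k:ℝ) ^ (l - T.card)) := by
    rw [hfib]
    push_cast
    apply Finset.sum_le_sum
    intro T hT
    have h1 : (bigS.filter (fun W => univ.filter (fun s => W s ∉ G W s) = T)).card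
        ≤ (univ.filter (fun W : Fin l → Fin (k+1) =>
            univ.filter (fun s => W s ∉ G W s) = T)).card := by
      apply Finset.card_le_card
      intro W hW
      rcases Finset.mem_filter.mp hW with ⟨_, h2⟩
      exact Finset.mem_filter.mpr ⟨Finset.mem_univ _, h2⟩
    have h2 := fiber_card hk G hGcard hGdep T
    have := le_trans h1 h2
    exact_mod_cast this
  -- per-term bound and extend to all subsets
  have hterm : ∀ T ∈ tfil, ((k:ℝ) ^ (l - T.card))
      ≤ (2:ℝ) ^ t * ((1/2:ℝ) ^ T.card * (k:ℝ) ^ (l - T.card)) := by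
    intro T hT
    have hTc : (T.card : ℝ) ≤ t := (Finset.mem_filter.mp hT).2
    have hone : (1:ℝ) ≤ (2:ℝ) ^ t * (1/2:ℝ) ^ T.card := by
      have e1 : ((1/2:ℝ)) ^ T.card = (2:ℝ) ^ (-(T.card : ℝ)) := by
        rw [Real.rpow_neg (by norm_num : (0:ℝ) ≤ 2), Real.rpow_natCast, one_div, inv_pow]
      rw [e1, ← Real.rpow_add (by norm_num)]
      have : (0:ℝ) ≤ t - T.card := by linarith
      calc (1:ℝ) = (2:ℝ) ^ (0:ℝ) := by rw [Real.rpow_zero]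
        _ ≤ (2:ℝ) ^ (t + -(T.card:ℝ)) := by
            apply Real.rpow_le_rpow_of_exponent_le (by norm_num)
            linarith
    calc (k:ℝ) ^ (l - T.card) = 1 * (k:ℝ) ^ (l - T.card) := by ring
      _ ≤ ((2:ℝ) ^ t * (1/2:ℝ) ^ T.card) * (k:ℝ) ^ (l - T.card) := by
          apply mul_le_mul_of_nonneg_right hone (by positivity)
      _ = (2:ℝ) ^ t * ((1/2:ℝ) ^ T.card * (k:ℝ) ^ (l - T.card)) := by ring
  have hstep2 : ∑ T ∈ tfil, ((k:ℝ) ^ (l - T.card))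
      ≤ (2:ℝ) ^ t * ∑ T : Finset (Fin l), ((1/2:ℝ) ^ T.card * (k:ℝ) ^ (l - T.card)) := by
    calc ∑ T ∈ tfil, ((k:ℝ) ^ (l - T.card))
        ≤ ∑ T ∈ tfil, (2:ℝ) ^ t * ((1/2:ℝ) ^ T.card * (k:ℝ) ^ (l - T.card)) :=
          Finset.sum_le_sum hterm
      _ ≤ ∑ T : Finset (Fin l), (2:ℝ) ^ t * ((1/2:ℝ) ^ T.card * (k:ℝ) ^ (l - T.card)) := by
          apply Finset.sum_le_sum_of_subset_of_nonneg (Finset.filter_subset _ _)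
          intro T _ _
          positivity
      _ = (2:ℝ) ^ t * ∑ T : Finset (Fin l), ((1/2:ℝ) ^ T.card * (k:ℝ) ^ (l - T.card)) := by
          rw [Finset.mul_sum]
  have hbinom : ∑ T : Finset (Fin l), ((1/2:ℝ) ^ T.card * (k:ℝ) ^ (l - T.card))
      = ((1/2:ℝ) + (k:ℝ)) ^ l := by
    have := Finset.prod_add (fun _ : Fin l => (1/2:ℝ)) (fun _ : Fin l => (k:ℝ)) univ
    rw [Finset.prod_const, Finset.card_univ, Fintype.card_fin] at this
    rw [this, Finset.powerset_univ]
    apply Finset.sum_congr rfl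
    intro T _
    rw [Finset.prod_const, Finset.prod_const, Finset.card_sdiff_of_subset (Finset.subset_univ T),
      Finset.card_univ, Fintype.card_fin]
  calc (bigS.card : ℝ) ≤ ∑ T ∈ tfil, ((k:ℝ) ^ (l - T.card)) := hstep1
    _ ≤ (2:ℝ) ^ t * ((1/2:ℝ) + (k:ℝ)) ^ l := by rw [← hbinom]; exact hstep2
    _ ≤ ((k:ℝ)+1) ^ l * Real.exp (-(l:ℝ)/(8*((k:ℝ)+1))) := analytic_bound k l hk

-- comb machinery

def comb {α : Type*} (n j l : ℕ) (P : Fin j → α) (W : Fin l → α)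
    (Q : Fin (n - (j + l)) → α) : Fin n → α :=
  fun i =>
    if h1 : (i : ℕ) < j then P ⟨i, h1⟩
    else if h2 : (i : ℕ) < j + l then W ⟨(i : ℕ) - j, by omega⟩
    else Q ⟨(i : ℕ) - (j + l), by have := i.isLt; omega⟩

def combEquiv (α : Type*) (n j l : ℕ) (hjl : j + l ≤ n) :
    ((Fin j → α) × (Fin l → α) × (Fin (n - (j + l)) → α)) ≃ (Fin n → α) where
  toFun t := comb n j l t.1 t.2.1 t.2.2
  invFun B := (fun a => B ⟨a, by omega⟩, fun s => B ⟨j + s, by omega⟩,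
    fun q => B ⟨j + l + q, by have := q.isLt; omega⟩)
  left_inv t := by
    obtain ⟨P, W, Q⟩ := t
    refine Prod.ext ?_ (Prod.ext ?_ ?_) <;> simp only
    · funext a
      simp only [comb]
      rw [dif_pos (show (a:ℕ) < j from a.isLt)]
    · funext s
      simp only [comb]
      rw [dif_neg (show ¬ j + (s:ℕ) < j by omega),
        dif_pos (show j + (s:ℕ) < j + l by have := s.isLt; omega)]
      congr 1
      exact Fin.ext (by show j + (s:ℕ) - j = (s:ℕ); omega)
    · funext q
      simp only [comb]
      rw [dif_neg (show ¬ j + l + (q:ℕ) < j by omega),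
        dif_neg (show ¬ j + l + (q:ℕ) < j + l by omega)]
      congr 1
      exact Fin.ext (by show j + l + (q:ℕ) - (j + l) = (q:ℕ); omega)
  right_inv B := by
    funext i
    simp only [comb]
    split_ifs with h1 h2
    · rfl
    · congr 1; exact Fin.ext (by show (j + ((i:ℕ) - j) : ℕ) = (i:ℕ); omega)
    · congr 1; exact Fin.ext (by show (j + l + ((i:ℕ) - (j+l)) : ℕ) = (i:ℕ); omega)

lemma sum_comb {α : Type*} {M : Type*} [Fintype α] [AddCommMonoid M]
    (n j l : ℕ) (hjl : j + l ≤ n) (F : (Fin n → α) → M) :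
    ∑ B : Fin n → α, F B
      = ∑ P : Fin j → α, ∑ W : Fin l → α, ∑ Q : Fin (n - (j + l)) → α,
          F (comb n j l P W Q) := by
  rw [← Equiv.sum_comp (combEquiv α n j l hjl) F]
  rw [Fintype.sum_prod_type]
  apply Finset.sum_congr rfl
  intro P _
  rw [Fintype.sum_prod_type]
  rfl

lemma bext_comb_lt {k n j l : ℕ} (hjl : j + l ≤ n) (P : Fin j → Lbl k) (W : Fin l → Lbl k)
    (Q : Fin (n - (j + l)) → Lbl k) {a : ℕ} (ha : a < j) :
    Bext (comb n j l P W Q) a = P ⟨a, ha⟩ := by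
  simp only [Bext, comb]
  rw [dif_pos (show a < n by omega), dif_pos (show a < j from ha)]

lemma bext_comb_mid {k n j l : ℕ} (hjl : j + l ≤ n) (P : Fin j → Lbl k) (W : Fin l → Lbl k)
    (Q : Fin (n - (j + l)) → Lbl k) {a : ℕ} (hja : j ≤ a) (ha : a < j + l) :
    Bext (comb n j l P W Q) a = W ⟨a - j, by omega⟩ := by
  simp only [Bext, comb]
  rw [dif_pos (show a < n by omega), dif_neg (show ¬ a < j by omega),
    dif_pos (show a < j + l from ha)]

lemma vOf_congr {k : ℕ} {f g : ℕ → Lbl k} {d : ℕ} (h : ∀ a < d, f a = g a) :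
    vOf f d = vOf g d := by
  unfold vOf
  apply List.map_congr_left
  intro a ha
  exact h a (List.mem_range.mp ha)

lemma smp_congr {k n m : ℕ} {B B' : Fin n → Lbl k} {dep : Fin m → ℕ} {j : ℕ}
    (hdep : ∀ i, dep i < j) (h : ∀ a < j, Bext B a = Bext B' a) :
    smp B dep = smp B' dep := by
  funext i
  unfold smp
  have h1 : vOf (Bext B) (dep i) = vOf (Bext B') (dep i) :=
    vOf_congr (fun a ha => h a (lt_trans ha (hdep i)))
  rw [h1, h (dep i) (hdep i)]

lemma AC_congr {k n l j : ℕ} {B B' : Fin n → Lbl k} (hh : HypT k)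
    (h : ∀ a < j + l, Bext B a = Bext B' a) :
    AlmostCorrect (Bext B) hh n l j ↔ AlmostCorrect (Bext B') hh n l j := by
  unfold AlmostCorrect
  have hfil : (Finset.range l).filter
        (fun s => Bext B (j+s) ∉ hh.1 (vOf (Bext B) (j+s)))
      = (Finset.range l).filter
        (fun s => Bext B' (j+s) ∉ hh.1 (vOf (Bext B') (j+s))) := by
    apply Finset.filter_congr
    intro s hs
    have hsl := Finset.mem_range.mp hs
    have h1 : Bext B (j+s) = Bext B' (j+s) := h _ (by omega)
    have h2 : vOf (Bext B) (j+s) = vOf (Bext B') (j+s) :=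
      vOf_congr (fun a ha => h a (by omega))
    rw [h1, h2]
  rw [hfil]

open Classical in
lemma countAC {k n l j : ℕ} (hk : 1 ≤ k) (hjl : j + l ≤ n)
    (P : Fin j → Lbl k) (Q0 : Fin (n - (j + l)) → Lbl k) (hh : HypT k) :
    ((univ.filter (fun W : Fin l → Lbl k =>
        AlmostCorrect (Bext (comb n j l P W Q0)) hh n l j)).card : ℝ)
      ≤ ((k:ℝ)+1)^l * Real.exp (-(l:ℝ)/(8*((k:ℝ)+1))) := by
  classical
  set G : (Fin l → Lbl k) → Fin l → Finset (Lbl k) :=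
    fun W s => hh.1 (vOf (Bext (comb n j l P W Q0)) (j + (s:ℕ))) with hGdef
  have hGcard : ∀ W s, (G W s).card = k := fun W s => hh.2 _
  have hGdep : ∀ W W' : Fin l → Lbl k, ∀ s, (∀ u, u < s → W u = W' u) → G W s = G W' s := by
    intro W W' s hWW'
    apply congrArg hh.1
    apply vOf_congr
    intro a ha
    by_cases haj : a < j
    · rw [bext_comb_lt hjl _ _ _ haj, bext_comb_lt hjl _ _ _ haj]
    · have h1 : j ≤ a := le_of_not_gt haj
      have h2 : a < j + l := by have := s.isLt; omega
      rw [bext_comb_mid hjl _ _ _ h1 h2, bext_comb_mid hjl _ _ _ h1 h2]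
      exact hWW' _ (by rw [Fin.lt_def]; show a - j < (s:ℕ); omega)
  have hpt : ∀ (W : Fin l → Lbl k) (s : Fin l),
      (Bext (comb n j l P W Q0) (j + (s:ℕ)) ∉
          hh.1 (vOf (Bext (comb n j l P W Q0)) (j + (s:ℕ))))
        ↔ (W s ∉ G W s) := by
    intro W s
    have hb : Bext (comb n j l P W Q0) (j + (s:ℕ)) = W s := by
      rw [bext_comb_mid hjl _ _ _ (Nat.le_add_right _ _) (by have := s.isLt; omega)]
      congr 1
      exact Fin.ext (by show j + (s:ℕ) - j = (s:ℕ); omega)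
    rw [hGdef, hb]
  have hcardeq : ∀ W : Fin l → Lbl k,
      ((Finset.range l).filter (fun s => Bext (comb n j l P W Q0) (j+s) ∉
          hh.1 (vOf (Bext (comb n j l P W Q0)) (j+s)))).card
      = (Finset.univ.filter (fun s : Fin l => W s ∉ G W s)).card := by
    intro W
    refine (Finset.card_bij (fun (s : Fin l) _ => (s:ℕ)) ?_ ?_ ?_).symm
    · intro s hs
      refine Finset.mem_filter.mpr ⟨Finset.mem_range.mpr s.isLt, ?_⟩
      exact (hpt W s).mpr (Finset.mem_filter.mp hs).2
    · intro a _ b _ hab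
      exact Fin.ext hab
    · intro a ha
      rcases Finset.mem_filter.mp ha with ⟨har, hac⟩
      have hal := Finset.mem_range.mp har
      exact ⟨⟨a, hal⟩, Finset.mem_filter.mpr ⟨Finset.mem_univ _, (hpt W ⟨a, hal⟩).mp hac⟩, rfl⟩
  have hfiltereq : Finset.univ.filter (fun W : Fin l → Lbl k =>
        AlmostCorrect (Bext (comb n j l P W Q0)) hh n l j)
      = Finset.univ.filter (fun W : Fin l → Lbl k =>
          ((Finset.univ.filter (fun s : Fin l => W s ∉ G W s)).card : ℝ)
            ≤ (l:ℝ)/(2*((k:ℝ)+1))) := by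
    apply Finset.filter_congr
    intro W _
    unfold AlmostCorrect
    rw [hcardeq W]
    exact ⟨fun x => x.2, fun x => ⟨hjl, x⟩⟩
  rw [hfiltereq]
  exact count_main hk G hGcard hGdep


open Classical in
lemma stepB {k m n l j : ℕ} (hk : 1 ≤ k) (dep : Fin m → ℕ)
    (A : (Fin m → Inst k × Lbl k) → PMF (HypT k))
    (hdepj : ∀ i, dep i < j) (hjl : j + l ≤ n) :
    ∑ B : Fin n → Lbl k, (A (smp B dep)).toOuterMeasure
        {h : HypT k | AlmostCorrect (Bext B) h n l j}
      ≤ ENNReal.ofReal (Real.exp (-(l:ℝ)/(8*((k:ℝ)+1)))) * ((k+1:ℕ) : ℝ≥0∞)^n := by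
  classical
  set c : ℝ := Real.exp (-(l:ℝ)/(8*((k:ℝ)+1))) with hc
  have hc0 : 0 ≤ c := le_of_lt (Real.exp_pos _)
  set W0 : Fin l → Lbl k := fun _ => 0 with hW0
  set Q0 : Fin (n - (j + l)) → Lbl k := fun _ => 0 with hQ0
  have hkey : ∀ (P : Fin j → Lbl k) (W : Fin l → Lbl k) (Q : Fin (n - (j+l)) → Lbl k),
      (A (smp (comb n j l P W Q) dep)).toOuterMeasure
          {h : HypT k | AlmostCorrect (Bext (comb n j l P W Q)) h n l j}
      = (A (smp (comb n j l P W0 Q0) dep)).toOuterMeasure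
          {h : HypT k | AlmostCorrect (Bext (comb n j l P W Q0)) h n l j} := by
    intro P W Q
    have h1 : smp (comb n j l P W Q) dep = smp (comb n j l P W0 Q0) dep := by
      apply smp_congr hdepj
      intro a ha
      rw [bext_comb_lt hjl _ _ _ ha, bext_comb_lt hjl _ _ _ ha]
    have h2 : {h : HypT k | AlmostCorrect (Bext (comb n j l P W Q)) h n l j}
        = {h : HypT k | AlmostCorrect (Bext (comb n j l P W Q0)) h n l j} := by
      ext hh
      simp only [Set.mem_setOf_eq]
      apply AC_congr
      intro a ha
      by_cases haj : a < j
      · rw [bext_comb_lt hjl _ _ _ haj, bext_comb_lt hjl _ _ _ haj]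
      · rw [bext_comb_mid hjl _ _ _ (le_of_not_gt haj) ha,
          bext_comb_mid hjl _ _ _ (le_of_not_gt haj) ha]
    rw [h1, h2]
  have hP : ∀ P : Fin j → Lbl k,
      ∑ W : Fin l → Lbl k, (A (smp (comb n j l P W0 Q0) dep)).toOuterMeasure
          {h : HypT k | AlmostCorrect (Bext (comb n j l P W Q0)) h n l j}
        ≤ ENNReal.ofReal (((k:ℝ)+1)^l * c) := by
    intro P
    set p := A (smp (comb n j l P W0 Q0) dep) with hpdef
    calc ∑ W : Fin l → Lbl k, p.toOuterMeasure
            {h : HypT k | AlmostCorrect (Bext (comb n j l P W Q0)) h n l j}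
        = ∑ W : Fin l → Lbl k, ∑' hh : HypT k, Set.indicator
            {h : HypT k | AlmostCorrect (Bext (comb n j l P W Q0)) h n l j} p hh := by
          exact Finset.sum_congr rfl (fun W _ => PMF.toOuterMeasure_apply p _)
      _ = ∑' hh : HypT k, ∑ W : Fin l → Lbl k, Set.indicator
            {h : HypT k | AlmostCorrect (Bext (comb n j l P W Q0)) h n l j} p hh :=
          (Summable.tsum_finsetSum (fun _ _ => ENNReal.summable)).symm
      _ ≤ ∑' hh : HypT k, ENNReal.ofReal (((k:ℝ)+1)^l * c) * p hh := by
          apply ENNReal.tsum_le_tsum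
          intro hh
          have hstep : ∑ W : Fin l → Lbl k, Set.indicator
              {h : HypT k | AlmostCorrect (Bext (comb n j l P W Q0)) h n l j} p hh
              = ((Finset.univ.filter (fun W : Fin l → Lbl k =>
                  AlmostCorrect (Bext (comb n j l P W Q0)) hh n l j)).card : ℝ≥0∞) * p hh := by
            simp_rw [Set.indicator_apply, Set.mem_setOf_eq]
            rw [← Finset.sum_filter, Finset.sum_const, nsmul_eq_mul]
          rw [hstep]
          apply mul_le_mul_left
          rw [← ENNReal.ofReal_natCast]
          exact ENNReal.ofReal_le_ofReal (countAC hk hjl P Q0 hh)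
      _ = ENNReal.ofReal (((k:ℝ)+1)^l * c) := by
          rw [ENNReal.tsum_mul_left, PMF.tsum_coe, mul_one]
  calc ∑ B : Fin n → Lbl k, (A (smp B dep)).toOuterMeasure
        {h : HypT k | AlmostCorrect (Bext B) h n l j}
      = ∑ P : Fin j → Lbl k, ∑ W : Fin l → Lbl k, ∑ Q : Fin (n - (j+l)) → Lbl k,
          (A (smp (comb n j l P W Q) dep)).toOuterMeasure
            {h : HypT k | AlmostCorrect (Bext (comb n j l P W Q)) h n l j} :=
        sum_comb n j l hjl _
    _ = ∑ P : Fin j → Lbl k, ∑ W : Fin l → Lbl k, ((k+1:ℕ) : ℝ≥0∞)^(n - (j+l)) *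
          (A (smp (comb n j l P W0 Q0) dep)).toOuterMeasure
            {h : HypT k | AlmostCorrect (Bext (comb n j l P W Q0)) h n l j} := by
        refine Finset.sum_congr rfl fun P _ => Finset.sum_congr rfl fun W _ => ?_
        rw [Finset.sum_congr rfl (fun Q _ => hkey P W Q), Finset.sum_const,
          Finset.card_univ, Fintype.card_fun, Fintype.card_fin, Fintype.card_fin,
          nsmul_eq_mul, Nat.cast_pow]
    _ ≤ ∑ P : Fin j → Lbl k, ((k+1:ℕ) : ℝ≥0∞)^(n - (j+l)) *
          ENNReal.ofReal (((k:ℝ)+1)^l * c) := by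
        refine Finset.sum_le_sum fun P _ => ?_
        rw [← Finset.mul_sum]
        exact mul_le_mul_right (hP P) _
    _ = ((k+1:ℕ) : ℝ≥0∞)^j * (((k+1:ℕ) : ℝ≥0∞)^(n - (j+l)) *
          ENNReal.ofReal (((k:ℝ)+1)^l * c)) := by
        rw [Finset.sum_const, Finset.card_univ, Fintype.card_fun, Fintype.card_fin,
          Fintype.card_fin, nsmul_eq_mul, Nat.cast_pow]
    _ = ENNReal.ofReal c * ((k+1:ℕ) : ℝ≥0∞)^n := by
        have hofr : ENNReal.ofReal (((k:ℝ)+1)^l * c)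
            = ((k+1:ℕ) : ℝ≥0∞)^l * ENNReal.ofReal c := by
          rw [ENNReal.ofReal_mul (by positivity), ENNReal.ofReal_pow (by positivity)]
          congr 2
          rw [show ((k:ℝ)+1) = ((k+1:ℕ) : ℝ) by push_cast; ring, ENNReal.ofReal_natCast]
        rw [hofr]
        rw [show (((k+1:ℕ) : ℝ≥0∞))^j * (((k+1:ℕ) : ℝ≥0∞)^(n - (j+l)) *
            (((k+1:ℕ) : ℝ≥0∞)^l * ENNReal.ofReal c))
          = ENNReal.ofReal c * ((k+1:ℕ) : ℝ≥0∞)^(j + (n - (j+l)) + l) from by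
            rw [pow_add, pow_add]; ring]
        congr 2
        omega


end Stmt10

namespace Stmt10

/-- Almost-correct intervals below the sample are unlikely: drawing a uniformly random branch
`B`, forming the sample at depths `dep`, and drawing `h ∼ A(S(B))`, the probability that some
almost-correct interval of length `l = ⌊log² n⌋` starts strictly below all sample depths is at
most `n · exp(−l/(8(k+1)))`. -/
theorem stmt10 (k m n : ℕ) (hk : 1 ≤ k) (hn : 2 ≤ n) (hm : 0 < m)
    (l : ℕ) (hl : l = ⌊(Real.logb 2 (n:ℝ))^2⌋₊)
    (dep : Fin m → ℕ) (hmono : Monotone dep) (hub : ∀ i, dep i ≤ n - 1)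
    (A : (Fin m → Inst k × Lbl k) → PMF (HypT k)) :
    (∑ B : Fin n → Lbl k,
        (A (smp B dep)).toOuterMeasure
          {h | ∃ j, (∀ i, dep i < j) ∧ AlmostCorrect (Bext B) h n l j})
        / (Fintype.card (Fin n → Lbl k) : ℝ≥0∞)
      ≤ ENNReal.ofReal ((n:ℝ) * Real.exp (-(l:ℝ)/(8*((k:ℝ)+1)))) := by
  classical
  have hl1 : 1 ≤ l := by
    rw [hl]
    refine Nat.le_floor ?_
    push_cast
    have h2n : (1:ℝ) ≤ Real.logb 2 n := by
      rw [Real.le_logb_iff_rpow_le (by norm_num : (1:ℝ) < 2)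
        (by positivity : (0:ℝ) < (n:ℝ))]
      rw [Real.rpow_one]
      exact_mod_cast le_trans (by norm_num) hn
    nlinarith
  set c : ℝ := Real.exp (-(l:ℝ)/(8*((k:ℝ)+1))) with hc
  have hc0 : 0 ≤ c := le_of_lt (Real.exp_pos _)
  have hcardfun : (Fintype.card (Fin n → Lbl k)) = (k+1)^n := by
    rw [Fintype.card_fun, Fintype.card_fin, Fintype.card_fin]
  have hcard0 : (Fintype.card (Fin n → Lbl k) : ℝ≥0∞) ≠ 0 := by
    rw [hcardfun]
    exact_mod_cast (Nat.cast_ne_zero (R := ℝ≥0∞)).mpr (by positivity)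
  have hcardtop : (Fintype.card (Fin n → Lbl k) : ℝ≥0∞) ≠ ∞ := ENNReal.natCast_ne_top _
  rw [ENNReal.div_le_iff hcard0 hcardtop]
  have hA : ∀ B : Fin n → Lbl k,
      (A (smp B dep)).toOuterMeasure
        {h | ∃ j, (∀ i, dep i < j) ∧ AlmostCorrect (Bext B) h n l j}
      ≤ ∑ j ∈ Finset.range n, (A (smp B dep)).toOuterMeasure
          {h : HypT k | (∀ i, dep i < j) ∧ AlmostCorrect (Bext B) h n l j} := by
    intro B
    set p := A (smp B dep) with hpdef
    have hpt : ∀ hh : HypT k,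
        Set.indicator {h : HypT k | ∃ j, (∀ i, dep i < j) ∧ AlmostCorrect (Bext B) h n l j} p hh
        ≤ ∑ j ∈ Finset.range n, Set.indicator
            {h : HypT k | (∀ i, dep i < j) ∧ AlmostCorrect (Bext B) h n l j} p hh := by
      intro hh
      by_cases hmem : hh ∈ {h : HypT k | ∃ j, (∀ i, dep i < j) ∧ AlmostCorrect (Bext B) h n l j}
      · rw [Set.indicator_of_mem hmem]
        obtain ⟨j, hj1, hj2⟩ := hmem
        have hjn : j ∈ Finset.range n := Finset.mem_range.mpr (by have := hj2.1; omega)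
        have hmem2 : hh ∈ {h : HypT k | (∀ i, dep i < j) ∧ AlmostCorrect (Bext B) h n l j} :=
          ⟨hj1, hj2⟩
        have heq : Set.indicator
            {h : HypT k | (∀ i, dep i < j) ∧ AlmostCorrect (Bext B) h n l j} p hh = p hh :=
          Set.indicator_of_mem hmem2 p
        calc p hh = Set.indicator
              {h : HypT k | (∀ i, dep i < j) ∧ AlmostCorrect (Bext B) h n l j} p hh := heq.symm
          _ ≤ _ := Finset.single_le_sum
              (f := fun j => Set.indicator
                {h : HypT k | (∀ i, dep i < j) ∧ AlmostCorrect (Bext B) h n l j} p hh)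
              (fun _ _ => zero_le) hjn
      · rw [Set.indicator_of_notMem hmem]; exact zero_le
    calc p.toOuterMeasure {h | ∃ j, (∀ i, dep i < j) ∧ AlmostCorrect (Bext B) h n l j}
        = ∑' hh, Set.indicator
            {h : HypT k | ∃ j, (∀ i, dep i < j) ∧ AlmostCorrect (Bext B) h n l j} p hh :=
          PMF.toOuterMeasure_apply p _
      _ ≤ ∑' hh, ∑ j ∈ Finset.range n, Set.indicator
            {h : HypT k | (∀ i, dep i < j) ∧ AlmostCorrect (Bext B) h n l j} p hh :=
          ENNReal.tsum_le_tsum hpt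
      _ = ∑ j ∈ Finset.range n, ∑' hh, Set.indicator
            {h : HypT k | (∀ i, dep i < j) ∧ AlmostCorrect (Bext B) h n l j} p hh :=
          Summable.tsum_finsetSum (fun _ _ => ENNReal.summable)
      _ = ∑ j ∈ Finset.range n, p.toOuterMeasure
            {h : HypT k | (∀ i, dep i < j) ∧ AlmostCorrect (Bext B) h n l j} := by
          exact Finset.sum_congr rfl (fun j _ => (PMF.toOuterMeasure_apply p _).symm)
  have hB : ∀ j, ∑ B : Fin n → Lbl k, (A (smp B dep)).toOuterMeasure
        {h : HypT k | (∀ i, dep i < j) ∧ AlmostCorrect (Bext B) h n l j}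
      ≤ ENNReal.ofReal c * ((k+1:ℕ) : ℝ≥0∞)^n := by
    intro j
    by_cases hdepj : ∀ i, dep i < j
    · by_cases hjl : j + l ≤ n
      · have hEj : ∀ B : Fin n → Lbl k,
            {h : HypT k | (∀ i, dep i < j) ∧ AlmostCorrect (Bext B) h n l j}
            = {h : HypT k | AlmostCorrect (Bext B) h n l j} :=
          fun B => Set.ext (fun hh => ⟨fun x => x.2, fun x => ⟨hdepj, x⟩⟩)
        calc ∑ B : Fin n → Lbl k, (A (smp B dep)).toOuterMeasure
              {h : HypT k | (∀ i, dep i < j) ∧ AlmostCorrect (Bext B) h n l j}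
            = ∑ B : Fin n → Lbl k, (A (smp B dep)).toOuterMeasure
              {h : HypT k | AlmostCorrect (Bext B) h n l j} :=
              Finset.sum_congr rfl (fun B _ => by rw [hEj B])
          _ ≤ ENNReal.ofReal c * ((k+1:ℕ) : ℝ≥0∞)^n := stepB hk dep A hdepj hjl
      · have hempty : ∀ B : Fin n → Lbl k,
            {h : HypT k | (∀ i, dep i < j) ∧ AlmostCorrect (Bext B) h n l j} = (∅ : Set (HypT k)) :=
          fun B => Set.eq_empty_iff_forall_notMem.mpr (fun hh hhm => hjl hhm.2.1)
        simp only [hempty, MeasureTheory.measure_empty]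
        simp
    · have hempty : ∀ B : Fin n → Lbl k,
          {h : HypT k | (∀ i, dep i < j) ∧ AlmostCorrect (Bext B) h n l j} = (∅ : Set (HypT k)) :=
        fun B => Set.eq_empty_iff_forall_notMem.mpr (fun hh hhm => hdepj hhm.1)
      simp only [hempty, MeasureTheory.measure_empty]
      simp
  calc ∑ B : Fin n → Lbl k, (A (smp B dep)).toOuterMeasure
        {h | ∃ j, (∀ i, dep i < j) ∧ AlmostCorrect (Bext B) h n l j}
      ≤ ∑ B : Fin n → Lbl k, ∑ j ∈ Finset.range n, (A (smp B dep)).toOuterMeasure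
          {h : HypT k | (∀ i, dep i < j) ∧ AlmostCorrect (Bext B) h n l j} :=
        Finset.sum_le_sum (fun B _ => hA B)
    _ = ∑ j ∈ Finset.range n, ∑ B : Fin n → Lbl k, (A (smp B dep)).toOuterMeasure
          {h : HypT k | (∀ i, dep i < j) ∧ AlmostCorrect (Bext B) h n l j} :=
        Finset.sum_comm
    _ ≤ ∑ j ∈ Finset.range n, ENNReal.ofReal c * ((k+1:ℕ) : ℝ≥0∞)^n :=
        Finset.sum_le_sum (fun j _ => hB j)
    _ = (n : ℝ≥0∞) * (ENNReal.ofReal c * ((k+1:ℕ) : ℝ≥0∞)^n) := by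
        rw [Finset.sum_const, Finset.card_range, nsmul_eq_mul]
    _ = ENNReal.ofReal ((n:ℝ) * c) * (Fintype.card (Fin n → Lbl k) : ℝ≥0∞) := by
        rw [ENNReal.ofReal_mul (by positivity : (0:ℝ) ≤ (n:ℝ)), ENNReal.ofReal_natCast,
          hcardfun, Nat.cast_pow]
        ring


end Stmt10
end

section
/- Iterated-logarithm bound used in the k-Littlestone lower bound: Let k ≥ 1 and d ≥ 2 be integers, set t = log*(d), assume t ≥ 10, and let m be an integer with 1 ≤ m ≤ t/(16·log(k+1)). Then log*( log_{(m+1)}(d) / 2^{24·(k+1)^{m+1}·m·log m} ) ≥ ⌊t/2⌋. -/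
namespace Stmt19

/-- Iterated base-2 logarithm. -/
noncomputable def logIter : ℕ → ℝ → ℝ
  | 0, x => x
  | (i+1), x => Real.logb 2 (logIter i x)

/-- `log⋆ x = min {t : logIter t x ≤ 1}`. -/
noncomputable def logStar (x : ℝ) : ℕ := sInf {t : ℕ | logIter t x ≤ 1}

/-! With `tower 0 = 1` and `tower (n + 1) = 2 ^ tower n` one has `n < log⋆ x ↔ tower n < x`.
For `t = log⋆ d` and `N = ⌊t/2⌋` this gives `tower (N + 2) < log_{(m+1)} d`, since `N + m + 3 < t`.
The bound on `m` makes the exponent `E = 24 (k+1)^{m+1} m log m ≤ 2 ^ (5 + t/4)` at most `tower N`,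
and `tower N * 2 ^ tower N ≤ tower (N + 2)`, so the quotient still exceeds `tower N`. -/

open Real

lemma logIter_add (i j : ℕ) (x : ℝ) : logIter (i + j) x = logIter i (logIter j x) := by
  induction i with
  | zero => simp [logIter]
  | succ i ih => rw [Nat.add_right_comm, logIter, ih, logIter]

lemma logIter_succ' (i : ℕ) (x : ℝ) : logIter (i + 1) x = logIter i (logb 2 x) :=
  logIter_add i 1 x

lemma two_mul_le_two_pow (a : ℕ) : 2 * a ≤ 2 ^ a := by
  rcases a with _ | a
  · simp
  · rw [pow_succ']
    exact Nat.mul_le_mul_left 2 Nat.lt_two_pow_self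

/-- `tower n = twr_{n+1}(1)`. -/
def tower : ℕ → ℕ
  | 0 => 1
  | n + 1 => 2 ^ tower n

@[simp] lemma tower_zero : tower 0 = 1 := rfl

lemma tower_succ (n : ℕ) : tower (n + 1) = 2 ^ tower n := rfl

lemma natCast_tower_succ (n : ℕ) : (tower (n + 1) : ℝ) = 2 ^ (tower n : ℝ) := by
  rw [tower_succ, rpow_natCast]; push_cast; rfl

lemma lt_tower (n : ℕ) : n < tower n := by
  induction n with
  | zero => simp
  | succ n ih => exact (Nat.succ_le_of_lt ih).trans_lt Nat.lt_two_pow_self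

lemma two_mul_le_tower (n : ℕ) : 2 * n ≤ tower n := by
  rcases n with _ | n
  · simp
  · exact (two_mul_le_two_pow (n + 1)).trans (Nat.pow_le_pow_right two_pos (lt_tower n))

lemma tower_mul_two_pow_le (n : ℕ) : tower n * 2 ^ tower n ≤ tower (n + 2) :=
  calc tower n * 2 ^ tower n ≤ 2 ^ tower n * 2 ^ tower n := by
        gcongr; exact Nat.lt_two_pow_self.le
    _ = 2 ^ (2 * tower n) := by rw [two_mul, pow_add]
    _ ≤ tower (n + 2) := Nat.pow_le_pow_right two_pos (two_mul_le_two_pow _)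

lemma tower_lt_iff_forall_one_lt_logIter {n : ℕ} {x : ℝ} :
    (tower n : ℝ) < x ↔ ∀ j < n + 1, 1 < logIter j x := by
  induction n generalizing x with
  | zero => simp [logIter]
  | succ n ih =>
    rw [Nat.forall_lt_succ_left]
    simp only [logIter_succ', ← ih]
    constructor
    · intro h
      have h1 : (1 : ℝ) < x := lt_of_le_of_lt (by exact_mod_cast Nat.one_le_two_pow) h
      rw [natCast_tower_succ, ← lt_logb_iff_rpow_lt one_lt_two (by linarith)] at h
      exact ⟨by simpa [logIter] using h1, h⟩
    · rintro ⟨hx, h⟩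
      rwa [natCast_tower_succ, ← lt_logb_iff_rpow_lt one_lt_two (by simp [logIter] at hx; linarith)]

lemma exists_logIter_le_one (x : ℝ) : ∃ j, logIter j x ≤ 1 := by
  by_contra! h
  have := (tower_lt_iff_forall_one_lt_logIter (n := ⌈x⌉₊)).2 fun j _ => h j
  have := (Nat.cast_lt (α := ℝ)).2 (lt_tower ⌈x⌉₊)
  linarith [Nat.le_ceil x]

lemma one_lt_logIter_of_lt_logStar {j : ℕ} {x : ℝ} (h : j < logStar x) : 1 < logIter j x :=
  lt_of_not_ge (Nat.notMem_of_lt_sInf h)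

lemma lt_logStar_iff {n : ℕ} {x : ℝ} : n < logStar x ↔ (tower n : ℝ) < x := by
  rw [tower_lt_iff_forall_one_lt_logIter]
  refine ⟨fun h j hj => one_lt_logIter_of_lt_logStar (by omega), fun h => ?_⟩
  by_contra! hle
  exact (h _ (Nat.lt_succ_of_le hle)).not_ge (Nat.sInf_mem (exists_logIter_le_one x))

lemma tower_lt_logIter_of_lt_logStar {n j : ℕ} {x : ℝ} (h : n + j < logStar x) :
    (tower n : ℝ) < logIter j x :=
  tower_lt_iff_forall_one_lt_logIter.2 fun i hi => by
    rw [← logIter_add]; exact one_lt_logIter_of_lt_logStar (by omega)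

lemma tower_lt_div_two_rpow {n : ℕ} {E X : ℝ} (hE : E ≤ tower n) (hX : tower (n + 2) < X) :
    (tower n : ℝ) < X / 2 ^ E := by
  rw [lt_div_iff₀ (by positivity)]
  calc (tower n : ℝ) * 2 ^ E ≤ tower n * 2 ^ (tower n : ℝ) := by gcongr; norm_num
    _ = (tower n * 2 ^ tower n : ℕ) := by rw [rpow_natCast]; push_cast; rfl
    _ ≤ tower (n + 2) := by exact_mod_cast tower_mul_two_pow_le n
    _ < X := hX

lemma logb_two_natCast_nonneg (m : ℕ) : 0 ≤ logb 2 m :=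
  div_nonneg (log_natCast_nonneg m) (log_nonneg one_le_two)

lemma natCast_mul_logb_le_two_rpow (m : ℕ) : (m : ℝ) * logb 2 m ≤ 2 ^ (2 * m : ℝ) := by
  rcases m.eq_zero_or_pos with rfl | hm
  · simp
  have hm2 : (m : ℝ) ≤ 2 ^ (m : ℝ) := by
    rw [rpow_natCast]; exact_mod_cast Nat.lt_two_pow_self.le
  have hlog : logb 2 m ≤ m := (logb_le_iff_le_rpow one_lt_two (by positivity)).2 hm2
  calc (m : ℝ) * logb 2 m ≤ 2 ^ (m : ℝ) * 2 ^ (m : ℝ) :=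
        mul_le_mul hm2 (hlog.trans hm2) (logb_two_natCast_nonneg m) (by positivity)
    _ = 2 ^ (2 * m : ℝ) := by rw [← rpow_add two_pos, two_mul]

lemma mul_pow_mul_logb_le_two_rpow {a : ℝ} (ha : 0 < a) (m : ℕ) :
    24 * a ^ (m + 1) * m * logb 2 m ≤ 2 ^ (5 + (m + 1) * logb 2 a + 2 * m) := by
  have hpow : a ^ (m + 1) = 2 ^ ((m + 1) * logb 2 a) := by
    rw [mul_comm, ← Nat.cast_add_one, rpow_mul_natCast zero_le_two, rpow_logb two_pos (by norm_num) ha]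
  calc 24 * a ^ (m + 1) * m * logb 2 m = 24 * a ^ (m + 1) * (m * logb 2 m) := by ring
    _ ≤ 2 ^ (5 : ℝ) * 2 ^ ((m + 1) * logb 2 a) * 2 ^ (2 * m : ℝ) := by
        rw [hpow]
        have := logb_two_natCast_nonneg m
        gcongr
        · norm_num
        · exact natCast_mul_logb_le_two_rpow m
    _ = 2 ^ (5 + (m + 1) * logb 2 a + 2 * m) := by rw [← rpow_add two_pos, ← rpow_add two_pos]

theorem stmt19_general (k d : ℕ) (hk : 1 ≤ k) (m : ℕ) (hm1 : 1 ≤ m)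
    (hm2 : (m:ℝ) ≤ (logStar (d:ℝ) : ℝ) / (16 * Real.logb 2 ((k:ℝ)+1))) :
    logStar (d:ℝ) / 2 ≤
      logStar (logIter (m+1) (d:ℝ) /
        (2:ℝ) ^ (24*((k:ℝ)+1)^(m+1)*(m:ℝ)*Real.logb 2 (m:ℝ))) := by
  set t := logStar (d:ℝ)
  set L := logb 2 ((k:ℝ) + 1)
  have hL : 1 ≤ L := by
    rw [le_logb_iff_rpow_le one_lt_two (by positivity), rpow_one]
    exact_mod_cast Nat.succ_le_succ hk
  have hm : (1 : ℝ) ≤ m := by exact_mod_cast hm1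
  have hmLt : 16 * m * L ≤ t := by
    rw [le_div_iff₀ (by positivity)] at hm2; linarith
  have h16m : 16 * m ≤ t := by exact_mod_cast (show (16 * m : ℝ) ≤ t by nlinarith)
  obtain ⟨n, hn⟩ : ∃ n, t / 2 = n + 1 := ⟨t / 2 - 1, by omega⟩
  have hexp : 5 + (m + 1) * L + 2 * m ≤ tower n := by
    have htn : (t : ℝ) ≤ 2 * n + 3 := by exact_mod_cast (show t ≤ 2 * n + 3 by omega)
    have htower : (2 * n : ℝ) ≤ tower n := by exact_mod_cast two_mul_le_tower n
    nlinarith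
  have hE := (mul_pow_mul_logb_le_two_rpow (a := (k : ℝ) + 1) (by positivity) m).trans
    (rpow_le_rpow_of_exponent_le one_le_two hexp)
  rw [← natCast_tower_succ] at hE
  have hX : (tower (n + 1 + 2) : ℝ) < logIter (m + 1) d :=
    tower_lt_logIter_of_lt_logStar (by omega)
  rw [hn]
  exact (lt_logStar_iff.2 (tower_lt_div_two_rpow hE hX)).le

/-- Iterated-logarithm bound used in the `k`-Littlestone lower bound. -/
theorem stmt19 (k d : ℕ) (hk : 1 ≤ k) (hd : 2 ≤ d)
    (ht : 10 ≤ logStar (d:ℝ)) (m : ℕ) (hm1 : 1 ≤ m)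
    (hm2 : (m:ℝ) ≤ (logStar (d:ℝ) : ℝ) / (16 * Real.logb 2 ((k:ℝ)+1))) :
    logStar (d:ℝ) / 2 ≤
      logStar (logIter (m+1) (d:ℝ) /
        (2:ℝ) ^ (24*((k:ℝ)+1)^(m+1)*(m:ℝ)*Real.logb 2 (m:ℝ))) :=
  stmt19_general k d hk m hm1 hm2

end Stmt19
end
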